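/- arXiv:1207.4843 — 4 statements merged into one kernel-verified Lean document; each statement's English description precedes it below -/
import Mathlib

section
/- For a compact set K ⊂ R^d and s ≥ 0, if the s-dimensional packing premeasure P₀^s(K) is finite, then P₀^s(K) equals the s-dimensional packing measure P^s(K). -/
open Metric Set MeasureTheory ENNReal Filter

noncomputable section

abbrev Euc (d : ℕ) : Type := EuclideanSpace ℝ (Fin d)

/-- A `δ`-packing of `E`: a countable family of pairwise disjoint open balls with
centers in `E` and radii at most `δ` (radius `0` gives an empty ball, allowing
finite packings). -/
def IsPacking {d : ℕ} (δ : ℝ) (E : Set (Euc d)) (c : ℕ → Euc d) (ρ : ℕ → ℝ) : Prop :=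
  (∀ n, c n ∈ E) ∧ (∀ n, 0 ≤ ρ n ∧ ρ n ≤ δ) ∧
    ∀ m n, m ≠ n → Disjoint (ball (c m) (ρ m)) (ball (c n) (ρ n))

/-- `P^s_δ(E)`: the supremum of `∑ diam(B_i)^s` over all `δ`-packings of `E`. -/
noncomputable def packCount {d : ℕ} (s δ : ℝ) (E : Set (Euc d)) : ℝ≥0∞ :=
  ⨆ (c : ℕ → Euc d) (ρ : ℕ → ℝ) (_ : IsPacking δ E c ρ),
    ∑' n, if 0 < ρ n then ENNReal.ofReal ((2 * ρ n) ^ s) else 0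

/-- The `s`-dimensional packing premeasure `P₀^s(E) = inf_{δ>0} P^s_δ(E)`. -/
noncomputable def packingPre {d : ℕ} (s : ℝ) (E : Set (Euc d)) : ℝ≥0∞ :=
  ⨅ (δ : ℝ) (_ : 0 < δ), packCount s δ E

/-- The `s`-dimensional packing measure
`P^s(E) = inf { ∑ P₀^s(E_n) : E ⊆ ⋃ E_n }`. -/
noncomputable def packingMeasure {d : ℕ} (s : ℝ) (E : Set (Euc d)) : ℝ≥0∞ :=
  ⨅ (F : ℕ → Set (Euc d)) (_ : E ⊆ ⋃ n, F n), ∑' n, packingPre s (F n)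

/-- Composition `f_{i₁} ∘ ⋯ ∘ f_{i_k}` along a word. -/
def wcomp {d N : ℕ} (f : Fin N → Euc d → Euc d) : List (Fin N) → Euc d → Euc d
  | [] => id
  | i :: w => f i ∘ wcomp f w

/-- `K` is in general position: it is not contained in any proper affine subspace
(in particular, in no hyperplane). -/
def GeneralPosition {d : ℕ} (K : Set (Euc d)) : Prop :=
  ∀ H : AffineSubspace ℝ (Euc d), K ⊆ (H : Set (Euc d)) → H = ⊤

open Topology

/-!
`P^s(K) ≤ P₀^s(K)` by covering `K` with itself, so the content is `P₀^s(K) ≤ ∑ P₀^s(G_n)` for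
every countable cover `K ⊆ ⋃ G_n`. Fix `θ ∈ (0, 1)`. A packing of `K` by balls centred close to a
set `F` splits into balls `B(x, ρ)` with `dist(x, F) < θρ`, which can be moved onto `F` after
shrinking by `1 - θ`, and balls with `D = dist(x, F) ≥ θρ`. The latter, shrunk to radius
`min(ρ, D/8)`, lose at most the factor `(8/θ)^s` and sit in dyadic shells around `F`; shells two
levels apart cannot share a ball, so the counts of all the shells add up to at most `2 P_δ(K) < ∞`,
and the shells close to `F` contribute an arbitrarily small tail. Hence
`P₀(K ∩ F_η) ≤ (1 - θ)^{-s} P₀(F) + ε` for small `η`. By compactness finitely many of the open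
sets `(G_n)_{η_n}` cover `K`, and finite subadditivity of `P₀` gives
`P₀(K) ≤ (1 - θ)^{-s} ∑ P₀(G_n) + ε`; let `ε, θ → 0`.
-/

section

variable {d : ℕ} {s δ δ' : ℝ} {E E' : Set (Euc d)} {c c' : ℕ → Euc d} {ρ ρ' : ℕ → ℝ}

def ballMass (s r : ℝ) : ℝ≥0∞ :=
  if 0 < r then ENNReal.ofReal ((2 * r) ^ s) else 0

def packingMass (s : ℝ) (ρ : ℕ → ℝ) : ℝ≥0∞ :=
  ∑' n, ballMass s (ρ n)

/-- `IsPacking` with constraints on the balls of positive radius only, so that balls can be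
discarded by setting their radius to `0`. -/
def IsWeakPacking (δ : ℝ) (E : Set (Euc d)) (c : ℕ → Euc d) (ρ : ℕ → ℝ) : Prop :=
  (∀ n, 0 < ρ n → c n ∈ E ∧ ρ n ≤ δ) ∧
    Pairwise fun m n => Disjoint (ball (c m) (ρ m)) (ball (c n) (ρ n))

theorem ballMass_of_nonpos {r : ℝ} (hr : r ≤ 0) : ballMass s r = 0 :=
  if_neg hr.not_gt

theorem ballMass_indicator (S : Set ℕ) (ρ : ℕ → ℝ) (n : ℕ) :
    ballMass s (S.indicator ρ n) = S.indicator (fun n => ballMass s (ρ n)) n := by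
  by_cases hn : n ∈ S <;> simp [hn, ballMass_of_nonpos]

theorem mem_and_pos_of_indicator_pos {S : Set ℕ} {n : ℕ} (h : 0 < S.indicator ρ n) :
    n ∈ S ∧ 0 < ρ n := by
  have hn : n ∈ S := Set.mem_of_indicator_ne_zero h.ne'
  exact ⟨hn, by rwa [Set.indicator_of_mem hn] at h⟩

theorem packingMass_indicator_add_compl (S : Set ℕ) (ρ : ℕ → ℝ) :
    packingMass s (S.indicator ρ) + packingMass s (Sᶜ.indicator ρ) = packingMass s ρ := by
  simp only [packingMass, ballMass_indicator, ← ENNReal.tsum_add,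
    Set.indicator_self_add_compl_apply]

theorem packingMass_eq_tsum_fiber (ρ : ℕ → ℝ) (f : ℕ → ℕ) :
    packingMass s ρ = ∑' k, packingMass s ((f ⁻¹' {k}).indicator ρ) := by
  classical
  simp only [packingMass, ballMass_indicator]
  rw [ENNReal.tsum_comm]
  refine tsum_congr fun n => ?_
  simp only [Set.indicator_apply, mem_preimage, mem_singleton_iff]
  exact (tsum_ite_eq' (f n) (fun _ => ballMass s (ρ n))).symm

theorem packingMass_le_ofReal_rpow_mul (hs : 0 ≤ s) {t : ℝ} (ht : 0 ≤ t)
    (h : ∀ n, 0 < ρ n → 0 < ρ' n ∧ ρ n ≤ t * ρ' n) :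
    packingMass s ρ ≤ ENNReal.ofReal (t ^ s) * packingMass s ρ' := by
  rw [packingMass, packingMass, ← ENNReal.tsum_mul_left]
  refine ENNReal.tsum_le_tsum fun n => ?_
  by_cases hn : 0 < ρ n
  · obtain ⟨hn', hle⟩ := h n hn
    rw [ballMass, ballMass, if_pos hn, if_pos hn', ← ENNReal.ofReal_mul (by positivity),
      ← Real.mul_rpow ht (by positivity)]
    exact ENNReal.ofReal_le_ofReal (Real.rpow_le_rpow (by positivity) (by nlinarith) hs)
  · simp [ballMass, hn]

theorem IsPacking.isWeakPacking (h : IsPacking δ E c ρ) : IsWeakPacking δ E c ρ :=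
  ⟨fun n _ => ⟨h.1 n, (h.2.1 n).2⟩, h.2.2⟩

theorem IsWeakPacking.of_subset_balls (h : IsWeakPacking δ E c ρ)
    (h' : ∀ n, 0 < ρ' n → c' n ∈ E' ∧ ρ' n ≤ δ' ∧ ball (c' n) (ρ' n) ⊆ ball (c n) (ρ n)) :
    IsWeakPacking δ' E' c' ρ' := by
  refine ⟨fun n hn => ⟨(h' n hn).1, (h' n hn).2.1⟩, fun m n hmn => ?_⟩
  rcases le_or_gt (ρ' m) 0 with hm | hm
  · simp [ball_eq_empty.2 hm]
  rcases le_or_gt (ρ' n) 0 with hn | hn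
  · simp [ball_eq_empty.2 hn]
  exact (h.2 hmn).mono (h' m hm).2.2 (h' n hn).2.2

theorem isWeakPacking_zero (δ : ℝ) (E : Set (Euc d)) (c : ℕ → Euc d) :
    IsWeakPacking δ E c 0 :=
  ⟨fun _ h => absurd h (lt_irrefl 0), fun _ _ _ => by simp⟩

theorem IsWeakPacking.packingMass_le (h : IsWeakPacking δ E c ρ) :
    packingMass s ρ ≤ packCount s δ E := by
  classical
  by_cases hpos : ∃ n, 0 < ρ n
  swap
  · simp only [not_exists, not_lt] at hpos
    simp [packingMass, ballMass_of_nonpos (hpos _)]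
  obtain ⟨n₀, hn₀⟩ := hpos
  let c' n := if 0 < ρ n then c n else c n₀
  let ρ' n := max (ρ n) 0
  have hδ : 0 ≤ δ := hn₀.le.trans (h.1 n₀ hn₀).2
  have hp : IsPacking δ E c' ρ' := by
    refine ⟨fun n => ?_, fun n => ⟨le_max_right _ _, max_le ?_ hδ⟩,
      (h.of_subset_balls (δ' := δ) (E' := E) fun n hn => ?_).2⟩
    · by_cases hn : 0 < ρ n
      · simpa [c', hn] using (h.1 n hn).1
      · simpa [c', hn] using (h.1 n₀ hn₀).1
    · rcases le_or_gt (ρ n) 0 with hn | hn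
      exacts [hn.trans hδ, (h.1 n hn).2]
    · have hρ : 0 < ρ n := (lt_max_iff.1 hn).resolve_right (lt_irrefl 0)
      simpa [c', ρ', hρ, hρ.le] using h.1 n hρ
  have hmass : packingMass s ρ' = packingMass s ρ :=
    tsum_congr fun n => by
      rcases le_or_gt (ρ n) 0 with hn | hn
      · simp only [ρ', max_eq_right hn, ballMass_of_nonpos hn, ballMass_of_nonpos le_rfl]
      · simp [ρ', hn.le]
  rw [← hmass]
  exact le_iSup_of_le c' (le_iSup_of_le ρ' (le_iSup_of_le hp le_rfl))

theorem packCount_le {a : ℝ≥0∞} (h : ∀ c ρ, IsWeakPacking δ E c ρ → packingMass s ρ ≤ a) :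
    packCount s δ E ≤ a :=
  iSup_le fun c => iSup₂_le fun ρ hp => h c ρ hp.isWeakPacking

theorem packCount_mono (hδ : δ ≤ δ') (hE : E ⊆ E') : packCount s δ E ≤ packCount s δ' E' :=
  packCount_le fun _ _ h => IsWeakPacking.packingMass_le <|
    h.of_subset_balls fun n hn => ⟨hE (h.1 n hn).1, (h.1 n hn).2.trans hδ, subset_rfl⟩

theorem packingPre_le_packCount (hδ : 0 < δ) : packingPre s E ≤ packCount s δ E :=
  iInf₂_le δ hδ

theorem packingPre_mono (hE : E ⊆ E') : packingPre s E ≤ packingPre s E' :=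
  iInf₂_mono fun _ _ => packCount_mono le_rfl hE

theorem packCount_empty : packCount s δ (∅ : Set (Euc d)) = 0 :=
  nonpos_iff_eq_zero.1 <| packCount_le fun _ ρ h => by
    have hρ : ∀ n, ρ n ≤ 0 := fun n => not_lt.1 fun hn => (h.1 n hn).1
    simp [packingMass, ballMass_of_nonpos (hρ _)]

theorem packingPre_empty : packingPre s (∅ : Set (Euc d)) = 0 :=
  nonpos_iff_eq_zero.1 (packCount_empty (δ := 1) ▸ packingPre_le_packCount one_pos)

theorem exists_packCount_ne_top (h : packingPre s E ≠ ⊤) : ∃ δ, 0 < δ ∧ packCount s δ E ≠ ⊤ := by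
  obtain ⟨δ, hδ⟩ := iInf_lt_iff.1 h.lt_top
  obtain ⟨hδ0, hlt⟩ := iInf_lt_iff.1 hδ
  exact ⟨δ, hδ0, hlt.ne⟩

theorem exists_isWeakPacking_le_packingMass_add (hfin : packCount s δ E ≠ ⊤) {ε : ℝ≥0∞}
    (hε : ε ≠ 0) : ∃ c ρ, IsWeakPacking δ E c ρ ∧ packCount s δ E ≤ packingMass s ρ + ε := by
  by_cases h0 : packCount s δ E = 0
  · exact ⟨0, 0, isWeakPacking_zero δ E 0, by simp [h0]⟩
  have hlt := ENNReal.sub_lt_self hfin h0 hε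
  conv_rhs at hlt => rw [packCount]
  obtain ⟨c, ρ, hp, hlt⟩ : ∃ c ρ, IsPacking δ E c ρ ∧ packCount s δ E - ε < packingMass s ρ := by
    simpa only [lt_iSup_iff, exists_prop, packingMass, ballMass] using hlt
  exact ⟨c, ρ, hp.isWeakPacking, tsub_le_iff_right.1 hlt.le⟩

section Combine

variable {A : ℕ → Set (Euc d)} {σ : ℕ → ℝ}

theorem isWeakPacking_unpair {c : ℕ → ℕ → Euc d} {ρ : ℕ → ℕ → ℝ}
    (h : ∀ k, IsWeakPacking (σ k) (A k) (c k) (ρ k)) (hσ : ∀ k, σ k ≤ δ) (hA : ∀ k, A k ⊆ E)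
    (hsep : ∀ k k', k ≠ k' → ∀ y ∈ A k, ∀ y' ∈ A k', ∀ r ≤ σ k, ∀ r' ≤ σ k',
      Disjoint (ball y r) (ball y' r')) :
    IsWeakPacking δ E (fun m => c m.unpair.1 m.unpair.2) (fun m => ρ m.unpair.1 m.unpair.2) := by
  refine ⟨fun m hm => ⟨hA _ ((h _).1 _ hm).1, ((h _).1 _ hm).2.trans (hσ _)⟩, ?_⟩
  have hprod : Pairwise fun p q : ℕ × ℕ =>
      Disjoint (ball (c p.1 p.2) (ρ p.1 p.2)) (ball (c q.1 q.2) (ρ q.1 q.2)) := by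
    rintro ⟨k, n⟩ ⟨k', n'⟩ hne
    by_cases hk : k = k'
    · subst hk
      exact (h k).2 fun hn => hne (congrArg (Prod.mk k) hn)
    rcases le_or_gt (ρ k n) 0 with hr | hr
    · simp [ball_eq_empty.2 hr]
    rcases le_or_gt (ρ k' n') 0 with hr' | hr'
    · simp [ball_eq_empty.2 hr']
    exact hsep k k' hk _ ((h k).1 n hr).1 _ ((h k').1 n' hr').1 _ ((h k).1 n hr).2 _
      ((h k').1 n' hr').2
  exact fun m m' hm => hprod (Nat.pairEquiv.symm.injective.ne hm)

theorem packingMass_unpair (ρ : ℕ → ℕ → ℝ) :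
    packingMass s (fun m => ρ m.unpair.1 m.unpair.2) = ∑' k, packingMass s (ρ k) :=
  (Nat.pairEquiv.symm.tsum_eq (fun p => ballMass s (ρ p.1 p.2))).trans
    (ENNReal.tsum_prod (f := fun k n => ballMass s (ρ k n)))

theorem tsum_packCount_le (hσ : ∀ k, σ k ≤ δ) (hA : ∀ k, A k ⊆ E)
    (hsep : ∀ k k', k ≠ k' → ∀ y ∈ A k, ∀ y' ∈ A k', ∀ r ≤ σ k, ∀ r' ≤ σ k',
      Disjoint (ball y r) (ball y' r')) :
    ∑' k, packCount s (σ k) (A k) ≤ packCount s δ E := by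
  by_cases htop : packCount s δ E = ⊤
  · exact htop ▸ le_top
  refine ENNReal.le_of_forall_pos_le_add fun ε hε _ => ?_
  obtain ⟨ε', hε'0, hε'⟩ := ENNReal.exists_pos_sum_of_countable' (ENNReal.coe_ne_zero.2 hε.ne') ℕ
  have hfin k : packCount s (σ k) (A k) ≠ ⊤ :=
    ne_top_of_le_ne_top htop (packCount_mono (hσ k) (hA k))
  choose c ρ hp hle using fun k => exists_isWeakPacking_le_packingMass_add (hfin k) (hε'0 k).ne'
  calc ∑' k, packCount s (σ k) (A k) ≤ ∑' k, (packingMass s (ρ k) + ε' k) :=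
        ENNReal.tsum_le_tsum hle
    _ = packingMass s (fun m => ρ m.unpair.1 m.unpair.2) + ∑' k, ε' k := by
        rw [ENNReal.tsum_add, packingMass_unpair]
    _ ≤ packCount s δ E + ε := add_le_add
        (isWeakPacking_unpair hp hσ hA hsep).packingMass_le hε'.le

end Combine

theorem packCount_union_le (A B : Set (Euc d)) :
    packCount s δ (A ∪ B) ≤ packCount s δ A + packCount s δ B := by
  refine packCount_le fun c ρ h => ?_
  classical
  let S := {n | c n ∈ A}
  rw [← packingMass_indicator_add_compl S ρ]
  refine add_le_add (IsWeakPacking.packingMass_le (c := c) ?_)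
    (IsWeakPacking.packingMass_le (c := c) ?_)
  all_goals refine h.of_subset_balls fun n hn => ?_
  · obtain ⟨hS, hn⟩ := mem_and_pos_of_indicator_pos hn
    rw [Set.indicator_of_mem hS]
    exact ⟨hS, (h.1 n hn).2, subset_rfl⟩
  · obtain ⟨hS, hn⟩ := mem_and_pos_of_indicator_pos hn
    rw [Set.indicator_of_mem hS]
    exact ⟨((h.1 n hn).1).resolve_left hS, (h.1 n hn).2, subset_rfl⟩

theorem packingPre_union_le (A B : Set (Euc d)) :
    packingPre s (A ∪ B) ≤ packingPre s A + packingPre s B := by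
  simp only [packingPre, iInf_subtype']
  refine ENNReal.le_iInf_add_iInf fun δ δ' => iInf_le_of_le ⟨min δ δ', lt_min δ.2 δ'.2⟩ ?_
  exact (packCount_union_le A B).trans
    (add_le_add (packCount_mono (min_le_left _ _) subset_rfl)
      (packCount_mono (min_le_right _ _) subset_rfl))

theorem packingPre_biUnion_le {ι : Type*} (S : Finset ι) (A : ι → Set (Euc d)) :
    packingPre s (⋃ i ∈ S, A i) ≤ ∑ i ∈ S, packingPre s (A i) := by
  classical
  induction S using Finset.induction_on with
  | empty => simp [packingPre_empty]
  | insert i S hi ih =>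
    rw [Finset.set_biUnion_insert, Finset.sum_insert hi]
    exact (packingPre_union_le _ _).trans (by gcongr)

theorem packingMeasure_le_packingPre (s : ℝ) (E : Set (Euc d)) :
    packingMeasure s E ≤ packingPre s E := by
  classical
  refine iInf₂_le_of_le (fun n => if n = 0 then E else ∅) (subset_iUnion_of_subset 0 (by simp)) ?_
  rw [tsum_eq_single 0 fun n hn => by simp [hn, packingPre_empty]]
  simp

/-- Balls whose centre lies within `θ ρ` of `F` are moved onto `F`, shrunk by the factor
`1 - θ`. -/
theorem packingMass_indicator_le_of_near (hs : 0 ≤ s) {θ : ℝ} (hθ : θ < 1) {F : Set (Euc d)}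
    (hF : F.Nonempty) (h : IsWeakPacking δ E c ρ) {S : Set ℕ} (hS : ∀ n ∈ S, infDist (c n) F < θ * ρ n) :
    packingMass s (S.indicator ρ) ≤ ENNReal.ofReal ((1 - θ)⁻¹ ^ s) * packCount s δ F := by
  have hz : ∀ n, ∃ z, n ∈ S → z ∈ F ∧ dist (c n) z < θ * ρ n := fun n => by
    by_cases hn : n ∈ S
    · obtain ⟨z, hz, hd⟩ := (infDist_lt_iff hF).1 (hS n hn)
      exact ⟨z, fun _ => ⟨hz, hd⟩⟩
    · exact ⟨c n, fun h => absurd h hn⟩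
  choose z hz using hz
  have hθ' : 0 < 1 - θ := sub_pos.2 hθ
  let ρ' := S.indicator fun n => (1 - θ) * ρ n
  refine (packingMass_le_ofReal_rpow_mul hs (inv_nonneg.2 hθ'.le) (ρ' := ρ') fun n hn => ?_).trans
    (mul_le_mul_right (IsWeakPacking.packingMass_le (c := z) ?_) _)
  · obtain ⟨hnS, hn⟩ := mem_and_pos_of_indicator_pos hn
    simp only [ρ', Set.indicator_of_mem hnS]
    exact ⟨by positivity, by rw [inv_mul_cancel_left₀ hθ'.ne']⟩
  · refine h.of_subset_balls fun n hn => ?_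
    obtain ⟨hnS, hn⟩ := mem_and_pos_of_indicator_pos hn
    have hρ : 0 < ρ n := pos_of_mul_pos_right hn hθ'.le
    obtain ⟨hzF, hzd⟩ := hz n hnS
    simp only [ρ', Set.indicator_of_mem hnS]
    refine ⟨hzF, ?_, ball_subset_ball' ?_⟩
    · have := infDist_nonneg.trans_lt (hS n hnS)
      linarith [(h.1 n hρ).2]
    · rw [dist_comm]; linarith

section Dyadic

variable {K F : Set (Euc d)}

def dyadicShell (K F : Set (Euc d)) (k : ℕ) : Set (Euc d) :=
  {y ∈ K | (2⁻¹ : ℝ) ^ (k + 1) < infDist y F ∧ infDist y F ≤ 2⁻¹ ^ k}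

def shellCount (s δ₁ : ℝ) (K F : Set (Euc d)) (k : ℕ) : ℝ≥0∞ :=
  packCount s (min δ₁ (2⁻¹ ^ (k + 3))) (dyadicShell K F k)

theorem exists_dyadic_level {x : ℝ} {J : ℕ} (hx : 0 < x) (hxJ : x < 2⁻¹ ^ J) :
    ∃ k, (2⁻¹ : ℝ) ^ (k + J + 1) < x ∧ x ≤ 2⁻¹ ^ (k + J) := by
  obtain ⟨m, hm1, hm2⟩ := exists_nat_pow_near_of_lt_one hx
    (hxJ.le.trans (pow_le_one₀ (by norm_num) (by norm_num))) (by norm_num : (0 : ℝ) < 2⁻¹)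
    (by norm_num)
  have hJm : J < m + 1 :=
    (pow_lt_pow_iff_right_of_lt_one₀ (by norm_num) (by norm_num)).1 (hm1.trans hxJ)
  refine ⟨m - J, ?_, ?_⟩ <;> rwa [Nat.sub_add_cancel (by omega)]

theorem infDist_mem_Ioo_of_mem_dyadicShell {k : ℕ} {y z : Euc d} {r : ℝ}
    (hy : y ∈ dyadicShell K F k) (hr : r ≤ 2⁻¹ ^ (k + 3)) (hz : z ∈ ball y r) :
    infDist z F ∈ Ioo (3 / 8 * (2⁻¹ : ℝ) ^ k) (9 / 8 * 2⁻¹ ^ k) := by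
  obtain ⟨-, hlow, hup⟩ := hy
  rw [mem_ball] at hz
  have hzy := infDist_le_infDist_add_dist (x := z) (y := y) (s := F)
  have hyz := infDist_le_infDist_add_dist (x := y) (y := z) (s := F)
  rw [dist_comm] at hyz
  have e1 : (2⁻¹ : ℝ) ^ (k + 1) = 2⁻¹ ^ k / 2 := by ring
  have e3 : (2⁻¹ : ℝ) ^ (k + 3) = 2⁻¹ ^ k / 8 := by ring
  exact ⟨by linarith, by linarith⟩

theorem disjoint_ball_of_mem_dyadicShell {k m : ℕ} (hkm : k + 2 ≤ m) {y y' : Euc d} {r r' : ℝ}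
    (hy : y ∈ dyadicShell K F k) (hy' : y' ∈ dyadicShell K F m) (hr : r ≤ 2⁻¹ ^ (k + 3))
    (hr' : r' ≤ 2⁻¹ ^ (m + 3)) : Disjoint (ball y r) (ball y' r') := by
  refine Set.disjoint_left.2 fun z hz hz' => ?_
  have hlow := (infDist_mem_Ioo_of_mem_dyadicShell hy hr hz).1
  have hup := (infDist_mem_Ioo_of_mem_dyadicShell hy' hr' hz').2
  have hm : (2⁻¹ : ℝ) ^ m ≤ 2⁻¹ ^ k / 4 :=
    calc (2⁻¹ : ℝ) ^ m ≤ 2⁻¹ ^ (k + 2) := pow_le_pow_of_le_one (by norm_num) (by norm_num) hkm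
      _ = 2⁻¹ ^ k / 4 := by ring
  have := pow_pos (by norm_num : (0 : ℝ) < 2⁻¹) k
  linarith

/-- Shells two levels apart are far apart compared with the admissible radii, so the even and the
odd shells each contribute at most one packing of `K`. -/
theorem tsum_shellCount_le (s δ₁ : ℝ) (K F : Set (Euc d)) :
    ∑' k, shellCount s δ₁ K F k ≤ 2 * packCount s δ₁ K := by
  rw [← tsum_even_add_odd ENNReal.summable ENNReal.summable, two_mul]
  unfold shellCount
  gcongr <;> refine tsum_packCount_le (fun k => min_le_left _ _) (fun k => sep_subset _ _)
    fun k k' hne y hy y' hy' r hr r' hr' => ?_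
  all_goals
    rcases hne.lt_or_gt with h | h
    · exact disjoint_ball_of_mem_dyadicShell (by omega) hy hy' (hr.trans (min_le_right _ _))
        (hr'.trans (min_le_right _ _))
    · exact (disjoint_ball_of_mem_dyadicShell (by omega) hy' hy (hr'.trans (min_le_right _ _))
        (hr.trans (min_le_right _ _))).symm

theorem packingMass_le_tsum_shellCount {δ₁ : ℝ} (hδ : δ ≤ δ₁) {J : ℕ}
    (h : IsWeakPacking δ (K ∩ thickening (2⁻¹ ^ J) F) c ρ)
    (hρ : ∀ n, 0 < ρ n → ρ n ≤ infDist (c n) F / 8) :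
    packingMass s ρ ≤ ∑' k, shellCount s δ₁ K F (k + J) := by
  have hlevel : ∀ n, ∃ k, 0 < ρ n →
      (2⁻¹ : ℝ) ^ (k + J + 1) < infDist (c n) F ∧ infDist (c n) F ≤ 2⁻¹ ^ (k + J) := fun n => by
    by_cases hn : 0 < ρ n
    · have hcF := (h.1 n hn).1.2
      have hF : F.Nonempty := (thickening_nonempty_iff.1 ⟨_, hcF⟩).2
      obtain ⟨k, hk⟩ := exists_dyadic_level (by linarith [hρ n hn])
        ((mem_thickening_iff_infDist_lt hF).1 hcF)
      exact ⟨k, fun _ => hk⟩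
    · exact ⟨0, fun h => absurd h hn⟩
  choose lev hlev using hlevel
  rw [packingMass_eq_tsum_fiber ρ lev]
  refine ENNReal.tsum_le_tsum fun k => IsWeakPacking.packingMass_le (c := c) ?_
  refine h.of_subset_balls fun n hn => ?_
  obtain ⟨hnk, hn⟩ := mem_and_pos_of_indicator_pos hn
  rw [Set.indicator_of_mem hnk]
  rw [mem_preimage, mem_singleton_iff] at hnk
  obtain ⟨hlow, hup⟩ := hlev n hn
  rw [hnk] at hlow hup
  have e3 : (2⁻¹ : ℝ) ^ (k + J + 3) = 2⁻¹ ^ (k + J) / 8 := by ring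
  refine ⟨⟨(h.1 n hn).1.1, hlow, hup⟩, le_min ((h.1 n hn).2.trans hδ) ?_, subset_rfl⟩
  linarith [hρ n hn]

/-- Balls whose centre is at distance `D ≥ θ ρ` from `F` are shrunk to radius `min ρ (D / 8)`. -/
theorem packingMass_indicator_le_of_far (hs : 0 ≤ s) {θ δ₁ : ℝ} (hθ0 : 0 < θ) (hθ1 : θ < 1)
    (hδ : δ ≤ δ₁) {J : ℕ} (h : IsWeakPacking δ (K ∩ thickening (2⁻¹ ^ J) F) c ρ) {S : Set ℕ}
    (hS : ∀ n ∈ S, θ * ρ n ≤ infDist (c n) F) :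
    packingMass s (S.indicator ρ) ≤
      ENNReal.ofReal ((8 / θ) ^ s) * ∑' k, shellCount s δ₁ K F (k + J) := by
  let ρ' := S.indicator fun n => min (ρ n) (infDist (c n) F / 8)
  have hpos : ∀ n, 0 < ρ' n → n ∈ S ∧ 0 < ρ n ∧ ρ' n = min (ρ n) (infDist (c n) F / 8) :=
    fun n hn => by
      obtain ⟨hnS, hn⟩ := mem_and_pos_of_indicator_pos hn
      exact ⟨hnS, hn.trans_le (min_le_left _ _), Set.indicator_of_mem hnS _⟩
  refine (packingMass_le_ofReal_rpow_mul hs (by positivity) (ρ' := ρ') fun n hn => ?_).trans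
    (mul_le_mul_right (packingMass_le_tsum_shellCount (c := c) hδ ?_ fun n hn => ?_) _)
  · obtain ⟨hnS, hn⟩ := mem_and_pos_of_indicator_pos hn
    have hD := (mul_pos hθ0 hn).trans_le (hS n hnS)
    simp only [ρ', Set.indicator_of_mem hnS]
    refine ⟨lt_min hn (by positivity), ?_⟩
    rcases min_cases (ρ n) (infDist (c n) F / 8) with ⟨hmin, -⟩ | ⟨hmin, -⟩ <;> rw [hmin]
    · exact le_mul_of_one_le_left hn.le ((one_le_div hθ0).2 (by linarith))
    · rw [div_mul_div_cancel₀' (by norm_num : (8 : ℝ) ≠ 0), le_div_iff₀ hθ0, mul_comm]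
      exact hS n hnS
  · refine h.of_subset_balls fun n hn => ?_
    obtain ⟨-, hρ, hρ'⟩ := hpos n hn
    rw [hρ']
    exact ⟨(h.1 n hρ).1, (min_le_left _ _).trans (h.1 n hρ).2, ball_subset_ball (min_le_left _ _)⟩
  · obtain ⟨-, -, hρ'⟩ := hpos n hn
    exact hρ'.trans_le (min_le_right _ _)

theorem packCount_inter_thickening_le (hs : 0 ≤ s) {θ δ₁ : ℝ} (hθ0 : 0 < θ) (hθ1 : θ < 1)
    (hF : F.Nonempty) (hδ : δ ≤ δ₁) (J : ℕ) :
    packCount s δ (K ∩ thickening (2⁻¹ ^ J) F) ≤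
      ENNReal.ofReal ((1 - θ)⁻¹ ^ s) * packCount s δ F +
        ENNReal.ofReal ((8 / θ) ^ s) * ∑' k, shellCount s δ₁ K F (k + J) :=
  packCount_le fun c ρ h => by
    let S := {n | infDist (c n) F < θ * ρ n}
    rw [← packingMass_indicator_add_compl S ρ]
    exact add_le_add (packingMass_indicator_le_of_near hs hθ1 hF h fun n hn => hn)
      (packingMass_indicator_le_of_far hs hθ0 hθ1 hδ h fun n hn => not_lt.1 hn)

end Dyadic

theorem le_mul_packingPre_add {a b c : ℝ≥0∞} {δ₁ : ℝ} (hδ₁ : 0 < δ₁) (hc0 : c ≠ 0) (hc : c ≠ ⊤)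
    (h : ∀ δ, 0 < δ → δ ≤ δ₁ → a ≤ c * packCount s δ E + b) : a ≤ c * packingPre s E + b := by
  simp only [packingPre, ENNReal.mul_iInf_of_ne hc0 hc, ENNReal.iInf_add]
  refine le_iInf₂ fun δ hδ => (h _ (lt_min hδ hδ₁) (min_le_right _ _)).trans ?_
  gcongr
  exact packCount_mono (min_le_left _ _) subset_rfl

theorem exists_packingPre_inter_thickening_le (hs : 0 ≤ s) {θ δ₁ : ℝ} (hθ0 : 0 < θ) (hθ1 : θ < 1)
    (hδ₁ : 0 < δ₁) {K : Set (Euc d)} (hK : packCount s δ₁ K ≠ ⊤) (F : Set (Euc d))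
    {ε : ℝ≥0∞} (hε : ε ≠ 0) :
    ∃ η > 0, packingPre s (K ∩ thickening η F) ≤
      ENNReal.ofReal ((1 - θ)⁻¹ ^ s) * packingPre s F + ε := by
  rcases F.eq_empty_or_nonempty with rfl | hF
  · exact ⟨1, one_pos, by simp [packingPre_empty]⟩
  have hsum : ∑' k, shellCount s δ₁ K F k ≠ ⊤ :=
    ne_top_of_le_ne_top (ENNReal.mul_ne_top ENNReal.ofNat_ne_top hK) (tsum_shellCount_le s δ₁ K F)
  have htail : Tendsto (fun J => ENNReal.ofReal ((8 / θ) ^ s) * ∑' k, shellCount s δ₁ K F (k + J))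
      atTop (𝓝 0) := by
    simpa using ENNReal.Tendsto.const_mul (ENNReal.tendsto_sum_nat_add _ hsum)
      (Or.inr ENNReal.ofReal_ne_top)
  obtain ⟨J, hJ⟩ := ((tendsto_order.1 htail).2 ε (pos_iff_ne_zero.2 hε)).exists
  have hθ' : 0 < (1 - θ)⁻¹ := inv_pos.2 (sub_pos.2 hθ1)
  refine ⟨2⁻¹ ^ J, by positivity, le_mul_packingPre_add hδ₁
    (ENNReal.ofReal_pos.2 (Real.rpow_pos_of_pos hθ' s)).ne' ENNReal.ofReal_ne_top
    fun δ hδ hδδ₁ => ?_⟩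
  calc packingPre s (K ∩ thickening (2⁻¹ ^ J) F)
      ≤ packCount s δ (K ∩ thickening (2⁻¹ ^ J) F) := packingPre_le_packCount hδ
    _ ≤ _ := packCount_inter_thickening_le hs hθ0 hθ1 hF hδδ₁ J
    _ ≤ _ := by gcongr

theorem le_of_forall_le_ofReal_inv_one_sub_rpow_mul {a b : ℝ≥0∞}
    (h : ∀ θ : ℝ, 0 < θ → θ < 1 → a ≤ ENNReal.ofReal ((1 - θ)⁻¹ ^ s) * b) : a ≤ b := by
  have hcont : ContinuousAt (fun θ : ℝ => ENNReal.ofReal ((1 - θ)⁻¹ ^ s)) 0 :=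
    ENNReal.continuous_ofReal.continuousAt.comp (f := fun θ : ℝ => (1 - θ)⁻¹ ^ s)
      (((continuousAt_const.sub continuousAt_id).inv₀ (by norm_num)).rpow_const
        (Or.inl (by norm_num)))
  have hlim : Tendsto (fun θ : ℝ => ENNReal.ofReal ((1 - θ)⁻¹ ^ s) * b) (𝓝[>] 0) (𝓝 b) := by
    simpa using ENNReal.Tendsto.mul_const
      (tendsto_nhdsWithin_of_tendsto_nhds (by simpa using hcont.tendsto)) (Or.inl one_ne_zero)
  exact ge_of_tendsto hlim (eventually_of_mem (Ioo_mem_nhdsGT one_pos) fun θ hθ => h θ hθ.1 hθ.2)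

theorem packingPre_le_tsum (hs : 0 ≤ s) {K : Set (Euc d)} (hK : IsCompact K)
    (hfin : packingPre s K ≠ ⊤) {G : ℕ → Set (Euc d)} (hcov : K ⊆ ⋃ n, G n) :
    packingPre s K ≤ ∑' n, packingPre s (G n) := by
  obtain ⟨δ₁, hδ₁, hδ₁K⟩ := exists_packCount_ne_top hfin
  refine le_of_forall_le_ofReal_inv_one_sub_rpow_mul (s := s) fun θ hθ0 hθ1 => ?_
  refine ENNReal.le_of_forall_pos_le_add fun ε hε _ => ?_
  obtain ⟨ε', hε'0, hε'⟩ := ENNReal.exists_pos_sum_of_countable' (ENNReal.coe_ne_zero.2 hε.ne') ℕ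
  choose η hη hηG using fun n =>
    exists_packingPre_inter_thickening_le hs hθ0 hθ1 hδ₁ hδ₁K (G n) (hε'0 n).ne'
  obtain ⟨S, hS⟩ := hK.elim_finite_subcover (fun n => thickening (η n) (G n))
    (fun n => isOpen_thickening) (hcov.trans (iUnion_mono fun n => self_subset_thickening (hη n) _))
  set c := ENNReal.ofReal ((1 - θ)⁻¹ ^ s)
  calc packingPre s K ≤ packingPre s (⋃ n ∈ S, K ∩ thickening (η n) (G n)) :=
        packingPre_mono fun x hx => by simpa [hx] using hS hx
    _ ≤ ∑ n ∈ S, packingPre s (K ∩ thickening (η n) (G n)) := packingPre_biUnion_le S _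
    _ ≤ ∑ n ∈ S, (c * packingPre s (G n) + ε' n) := Finset.sum_le_sum fun n _ => hηG n
    _ ≤ ∑' n, (c * packingPre s (G n) + ε' n) := ENNReal.sum_le_tsum S
    _ = c * ∑' n, packingPre s (G n) + ∑' n, ε' n := by
        rw [ENNReal.tsum_add, ENNReal.tsum_mul_left]
    _ ≤ c * ∑' n, packingPre s (G n) + ε := by gcongr

end

/-- for a compact set `K ⊆ ℝ^d` and `s ≥ 0`, if the packing
premeasure `P₀^s(K)` is finite, then it equals the packing measure `P^s(K)`. -/
theorem stmt4 {d : ℕ} (s : ℝ) (hs : 0 ≤ s) (K : Set (Euc d)) (hKc : IsCompact K)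
    (hfin : packingPre s K ≠ ⊤) :
    packingPre s K = packingMeasure s K :=
  le_antisymm (le_iInf₂ fun _ hG => packingPre_le_tsum hs hKc hfin hG)
    (packingMeasure_le_packingPre s K)
end
end

section
/- Let K be the attractor of an IFS {f_1,...,f_N} of similitudes satisfying the strong open set condition with open set O, with dimension s, and let λ be the normalized self-similar measure. If B(x,r) ⊆ O is a ball centered at a point of K and 1 ≤ j ≤ N, then λ(f_j(B(x,r))) = r_j^s · λ(B(x,r)); consequently the reciprocal density is invariant: (2r)^s/λ(B(x,r)) = (2 r r_j)^s / λ(f_j(B(x,r))). -/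
open Metric Set MeasureTheory ENNReal Filter

noncomputable section

open scoped NNReal Topology

/-!
If a nonempty set `C` is mapped into itself by maps that are all `c`-Lipschitz with `c < 1`,
then `K ⊆ closure C`: at a point `f i u` of `K` maximizing `infDist · C`, that maximum is at most
`c · infDist u C ≤ c · max`. The same contraction of `infDist · K` (as `K` is invariant) shows,
via the self-similarity equation, that `R ↦ μ {infDist · K > R}` does not increase when `R` is
multiplied by `c`; letting `R → ∞` gives `μ Kᶜ = 0`. For a ball `B ⊆ O` and `i ≠ j`, the set
`f_i⁻¹(f_j B)` misses `K ⊆ closure O`, because the open set `f_j O` misses `f_i O` and hence its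
closure; so only the `j`-th term of the self-similarity equation for `f_j B` survives.
-/

theorem injective_of_dist_eq_mul {Y : Type*} [MetricSpace Y] {g : Y → Y} {c : ℝ} (hc : 0 < c)
    (hg : ∀ x y, dist (g x) (g y) = c * dist x y) : Function.Injective g := fun a b hab => by
  simpa [hab, hc.ne'] using hg a b

section Similarity

variable {E : Type*} [NormedAddCommGroup E] [NormedSpace ℝ E] [StrictConvexSpace ℝ E]
  [FiniteDimensional ℝ E] {g : E → E} {c : ℝ}

theorem surjective_of_dist_eq_mul (hc : 0 < c) (hg : ∀ x y, dist (g x) (g y) = c * dist x y) :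
    Function.Surjective g := by
  have hiso : Isometry (fun y => c⁻¹ • g y) := Isometry.of_dist_eq fun a b => by
    rw [dist_smul₀, hg, Real.norm_of_nonneg (inv_nonneg.2 hc.le), inv_mul_cancel_left₀ hc.ne']
  set A := hiso.affineIsometryOfStrictConvexSpace
  have hA : Function.Surjective A := by
    have hlin : Function.Surjective A.linearIsometry :=
      (A.linearIsometry.toLinearIsometryEquiv rfl).surjective
    exact A.toAffineMap.linear_surjective_iff.1 hlin
  intro z
  obtain ⟨y, hy⟩ := hA (c⁻¹ • z)
  refine ⟨y, ?_⟩
  rw [hiso.coe_affineIsometryOfStrictConvexSpace] at hy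
  simpa [smul_smul, mul_inv_cancel₀ hc.ne'] using congrArg (c • ·) hy

theorem image_ball_of_dist_eq_mul (hc : 0 < c) (hg : ∀ x y, dist (g x) (g y) = c * dist x y)
    (x : E) (t : ℝ) : g '' ball x t = ball (g x) (c * t) := by
  ext z
  obtain ⟨y, rfl⟩ := surjective_of_dist_eq_mul hc hg z
  rw [(injective_of_dist_eq_mul hc hg).mem_set_image, mem_ball, mem_ball, hg,
    mul_lt_mul_iff_right₀ hc]

theorem isOpenMap_of_dist_eq_mul (hc : 0 < c) (hg : ∀ x y, dist (g x) (g y) = c * dist x y) :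
    IsOpenMap g := by
  intro U hU
  rw [Metric.isOpen_iff]
  rintro _ ⟨y, hy, rfl⟩
  obtain ⟨ε, hε, hεU⟩ := Metric.isOpen_iff.1 hU y hy
  exact ⟨c * ε, mul_pos hc hε, image_ball_of_dist_eq_mul hc hg y ε ▸ image_mono hεU⟩

end Similarity

section Attractor

variable {X : Type*} [MetricSpace X] {ι : Type*} {f : ι → X → X} {c : ℝ≥0}

theorem LipschitzWith.infDist_le_mul_of_mapsTo {g : X → X} (hg : LipschitzWith c g) {C : Set X}
    (hC : C.Nonempty) (hgC : MapsTo g C C) (x : X) : infDist (g x) C ≤ c * infDist x C := by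
  have : Nonempty C := hC.to_subtype
  rw [infDist_eq_iInf (x := x), Real.mul_iInf_of_nonneg c.coe_nonneg]
  refine le_ciInf fun y => ?_
  exact (infDist_le_dist_of_mem (hgC y.2)).trans (hg.dist_le_mul x y)

theorem subset_closure_of_mapsTo (hc : c < 1) (hf : ∀ i, LipschitzWith c (f i)) {K C : Set X}
    (hK : IsCompact K) (hKf : K ⊆ ⋃ i, f i '' K) (hC : C.Nonempty)
    (hfC : ∀ i, MapsTo (f i) C C) : K ⊆ closure C := by
  rcases K.eq_empty_or_nonempty with rfl | hKne
  · exact empty_subset _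
  obtain ⟨y₀, hy₀, hmax⟩ := hK.exists_isMaxOn hKne (continuous_infDist_pt C).continuousOn
  rw [isMaxOn_iff] at hmax
  obtain ⟨i, u, hu, rfl⟩ := mem_iUnion.1 (hKf hy₀)
  have hle : infDist (f i u) C ≤ c * infDist (f i u) C :=
    ((hf i).infDist_le_mul_of_mapsTo hC (hfC i) u).trans
      (mul_le_mul_of_nonneg_left (hmax u hu) c.coe_nonneg)
  have hzero : infDist (f i u) C = 0 := by
    have hc : (c : ℝ) < 1 := hc
    nlinarith [infDist_nonneg (x := f i u) (s := C)]
  intro y hy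
  rw [mem_closure_iff_infDist_zero hC]
  exact le_antisymm ((hmax y hy).trans hzero.le) infDist_nonneg

theorem measure_compl_eq_zero_of_mapsTo [MeasurableSpace X] [OpensMeasurableSpace X]
    [Fintype ι] (hc : c < 1) (hf : ∀ i, LipschitzWith c (f i)) {K : Set X} (hK : IsClosed K)
    (hKne : K.Nonempty) (hfK : ∀ i, MapsTo (f i) K K) {p : ι → ℝ≥0∞} (hp : ∑ i, p i ≤ 1)
    {μ : Measure X} [IsFiniteMeasure μ]
    (hμ : ∀ A, MeasurableSet A → μ A = ∑ i, p i * μ (f i ⁻¹' A)) : μ Kᶜ = 0 := by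
  set m : ℝ → ℝ≥0∞ := fun R => μ {y | R < infDist y K}
  have hmeas : ∀ R : ℝ, MeasurableSet {y | R < infDist y K} := fun R =>
    (isOpen_lt continuous_const (continuous_infDist_pt K)).measurableSet
  have hanti : Antitone m := fun R R' h => measure_mono fun y hy => lt_of_le_of_lt h hy
  have hstep : ∀ R, m (c * R) ≤ m R := by
    intro R
    calc m (c * R) = ∑ i, p i * μ (f i ⁻¹' {y | c * R < infDist y K}) := hμ _ (hmeas _)
      _ ≤ ∑ i, p i * m R := by
          gcongr with i
          refine measure_mono fun y hy => ?_
          exact lt_of_mul_lt_mul_left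
            (hy.trans_le ((hf i).infDist_le_mul_of_mapsTo hKne (hfK i) y)) c.coe_nonneg
      _ = (∑ i, p i) * m R := (Finset.sum_mul ..).symm
      _ ≤ m R := mul_le_of_le_one_left' hp
  have hiter : ∀ n R, m (c ^ n * R) ≤ m R := by
    intro n
    induction n with
    | zero => simp
    | succ n ih => intro R; rw [pow_succ', mul_assoc]; exact (hstep _).trans (ih R)
  have hlim : Tendsto (fun k : ℕ => m k) atTop (𝓝 0) := by
    have hempty : ⋂ k : ℕ, {y | (k : ℝ) < infDist y K} = ∅ :=
      iInter_eq_empty_iff.2 fun y => (exists_nat_ge (infDist y K)).imp fun _ => not_lt.2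
    have := tendsto_measure_iInter_atTop (μ := μ) (fun k : ℕ => (hmeas k).nullMeasurableSet)
      (fun a b h => ofPred_subset_ofPred.2 fun y => (Nat.cast_le.2 h).trans_lt)
      ⟨0, measure_ne_top _ _⟩
    rwa [hempty, measure_empty] at this
  have hpos : ∀ ε > 0, m ε = 0 := by
    intro ε hε
    refine le_antisymm (ge_of_tendsto' hlim fun k => ?_) zero_le
    have hsmall : Tendsto (fun n => (c : ℝ) ^ n * k) atTop (𝓝 0) := by
      simpa using (tendsto_pow_atTop_nhds_zero_of_lt_one c.coe_nonneg hc).mul_const (k : ℝ)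
    obtain ⟨n, hn⟩ := (hsmall.eventually (gt_mem_nhds hε)).exists
    exact (hanti hn.le).trans (hiter n k)
  have hcover : Kᶜ ⊆ ⋃ n : ℕ, {y | 1 / ((n : ℝ) + 1) < infDist y K} := fun y hy =>
    mem_iUnion.2 (exists_nat_one_div_lt ((hK.notMem_iff_infDist_pos hKne).1 hy))
  exact measure_mono_null hcover (measure_iUnion_null fun n => hpos _ (by positivity))

end Attractor

theorem measure_image_eq_mul_of_subset {X ι : Type*} [TopologicalSpace X] [MeasurableSpace X]
    [Fintype ι] {f : ι → X → X} {p : ι → ℝ≥0∞} {μ : Measure X}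
    (hμ : ∀ A, MeasurableSet A → μ A = ∑ i, p i * μ (f i ⁻¹' A)) {K O : Set X}
    (hK : μ Kᶜ = 0) (hKO : K ⊆ closure O) (hcont : ∀ i, Continuous (f i))
    (hdisj : ∀ i j, i ≠ j → Disjoint (f i '' O) (f j '' O)) {j : ι} (hjO : IsOpen (f j '' O))
    (hj : Function.Injective (f j)) {A : Set X} (hAO : A ⊆ O) (hA : MeasurableSet (f j '' A)) :
    μ (f j '' A) = p j * μ A := by
  have hnull : ∀ i ≠ j, μ (f i ⁻¹' (f j '' A)) = 0 := fun i hij =>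
    measure_mono_null (fun y hy hyK => disjoint_left.1
      ((hdisj j i hij.symm).closure_right hjO) (image_mono hAO hy)
      (image_closure_subset_closure_image (hcont i) ⟨y, hKO hyK, rfl⟩)) hK
  rw [hμ _ hA, Finset.sum_eq_single j (fun i _ hij => by rw [hnull i hij, mul_zero]) (by simp),
    hj.preimage_image]

theorem stmt7_general
    {d N : ℕ}
    (f : Fin N → Euc d → Euc d) (r : Fin N → ℝ)
    (hr0 : ∀ i, 0 < r i) (hr1 : ∀ i, r i < 1)
    (hsim : ∀ i x y, dist (f i x) (f i y) = r i * dist x y)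
    (K : Set (Euc d)) (hKc : IsCompact K)
    (hKinv : K = ⋃ i, f i '' K)
    (O : Set (Euc d)) (hO : IsOpen O)
    (hOmap : ∀ i, f i '' O ⊆ O)
    (hOdisj : ∀ i j, i ≠ j → Disjoint (f i '' O) (f j '' O))
    (s : ℝ) (hs : ∑ i, r i ^ s = 1)
    (μ : Measure (Euc d)) (hμp : IsProbabilityMeasure μ)
    (hμss : ∀ A : Set (Euc d), MeasurableSet A →
      μ A = ∑ i, ENNReal.ofReal (r i ^ s) * μ (f i ⁻¹' A))
    (x : Euc d) (hx : x ∈ K) (t : ℝ) (ht : 0 < t) (hball : ball x t ⊆ O)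
    (j : Fin N) :
    μ (f j '' ball x t) = ENNReal.ofReal (r j ^ s) * μ (ball x t) ∧
      ENNReal.ofReal ((2 * t) ^ s) / μ (ball x t)
        = ENNReal.ofReal ((2 * (t * r j)) ^ s) / μ (f j '' ball x t) := by
  set c : ℝ≥0 := Finset.univ.sup fun i => (r i).toNNReal
  have hc : c < 1 := Finset.sup_lt_iff one_pos |>.2 fun i _ => Real.toNNReal_lt_one.2 (hr1 i)
  have hrc : ∀ i, r i ≤ c := fun i => (Real.le_coe_toNNReal _).trans
    (NNReal.coe_le_coe.2 (Finset.le_sup (f := fun i => (r i).toNNReal) (Finset.mem_univ i)))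
  have hf : ∀ i, LipschitzWith c (f i) := fun i => LipschitzWith.of_dist_le_mul fun a b => by
    rw [hsim]
    gcongr
    exact hrc i
  have hfK : ∀ i, MapsTo (f i) K K := fun i =>
    mapsTo_iff_image_subset.2 ((subset_iUnion (fun i => f i '' K) i).trans hKinv.ge)
  have hKO : K ⊆ closure O := subset_closure_of_mapsTo hc hf hKc hKinv.le
    ⟨x, hball (mem_ball_self ht)⟩ fun i => mapsTo_iff_image_subset.2 (hOmap i)
  have hp : ∑ i, ENNReal.ofReal (r i ^ s) = 1 := by
    rw [← ENNReal.ofReal_sum_of_nonneg fun i _ => Real.rpow_nonneg (hr0 i).le s, hs, ofReal_one]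
  have hK : μ Kᶜ = 0 :=
    measure_compl_eq_zero_of_mapsTo hc hf hKc.isClosed ⟨x, hx⟩ hfK hp.le hμss
  have hmeas : MeasurableSet (f j '' ball x t) := by
    rw [image_ball_of_dist_eq_mul (hr0 j) (hsim j)]
    exact measurableSet_ball
  have key := measure_image_eq_mul_of_subset hμss hK hKO (fun i => (hf i).continuous) hOdisj
    (isOpenMap_of_dist_eq_mul (hr0 j) (hsim j) O hO) (injective_of_dist_eq_mul (hr0 j) (hsim j))
    hball hmeas
  refine ⟨key, ?_⟩
  rw [key, ← mul_assoc, Real.mul_rpow (by positivity) (hr0 j).le,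
    ENNReal.ofReal_mul (by positivity), mul_comm (ENNReal.ofReal ((2 * t) ^ s)),
    ENNReal.mul_div_mul_left _ _ (by simpa using Real.rpow_pos_of_pos (hr0 j) s) ofReal_ne_top]

/-- Lemma 2.3, blow-up principle: for a ball `B(x,r) ⊆ O` centered
in `K` and any `j`, `λ(f_j(B(x,r))) = r_j^s λ(B(x,r))`, hence the reciprocal
density is invariant under `f_j`. -/
theorem stmt7
    {d N : ℕ} (hN : 2 ≤ N)
    (f : Fin N → Euc d → Euc d) (r : Fin N → ℝ)
    (hr0 : ∀ i, 0 < r i) (hr1 : ∀ i, r i < 1)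
    (hsim : ∀ i x y, dist (f i x) (f i y) = r i * dist x y)
    (K : Set (Euc d)) (hKne : K.Nonempty) (hKc : IsCompact K)
    (hKinv : K = ⋃ i, f i '' K)
    (O : Set (Euc d)) (hO : IsOpen O) (hObd : Bornology.IsBounded O)
    (hOmap : ∀ i, f i '' O ⊆ O)
    (hOdisj : ∀ i j, i ≠ j → Disjoint (f i '' O) (f j '' O))
    (hSOSC : (O ∩ K).Nonempty)
    (s : ℝ) (hs : ∑ i, r i ^ s = 1)
    (μ : Measure (Euc d)) (hμp : IsProbabilityMeasure μ)
    (hμss : ∀ A : Set (Euc d), MeasurableSet A →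
      μ A = ∑ i, ENNReal.ofReal (r i ^ s) * μ (f i ⁻¹' A))
    (x : Euc d) (hx : x ∈ K) (t : ℝ) (ht : 0 < t) (hball : ball x t ⊆ O)
    (j : Fin N) :
    μ (f j '' ball x t) = ENNReal.ofReal (r j ^ s) * μ (ball x t) ∧
      ENNReal.ofReal ((2 * t) ^ s) / μ (ball x t)
        = ENNReal.ofReal ((2 * (t * r j)) ^ s) / μ (f j '' ball x t) :=
  stmt7_general f r hr0 hr1 hsim K hKc hKinv O hO hOmap hOdisj s hs μ hμp hμss x hx t ht hball j
end
end

section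
/- Let K be the attractor of an IFS {f_1,...,f_N} of similitudes with ratios r_i and dimension s, satisfying the strong separation condition with separation constant Δ > 0 (i.e., d(f_i(K), f_j(K)) > Δ for all i ≠ j), K in general position, and let λ be the normalized self-similar measure and r_* = min_i r_i. Then P^s(K) = sup{ (2r)^s/λ(B(x,r)) : x ∈ K, r_*Δ/2 ≤ r ≤ Δ/2 }. -/
open Metric Set MeasureTheory ENNReal Filter

noncomputable section

/-!
Write `S` for the supremum on the right and `p_w = r_w^s` for the weight of a word `w`.

Upper bound: a ball `B(x, ρ)` with `x ∈ K` and `ρ ≤ Δ/2` is the image under the similitude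
`f_w` of some word of a ball `B(y, t)` with `y ∈ K` and `t` in the band `[r_* Δ/2, Δ/2]`. By
strong separation the measure of such a ball only sees one piece at each level, so
`μ(B(x, ρ)) = p_w μ(B(y, t))` while `(2ρ)^s = p_w (2t)^s`; hence `(2ρ)^s ≤ S μ(B(x, ρ))`, and
summing over the disjoint balls of a `Δ/2`-packing gives `P^s(K) ≤ S`.

Lower bound: for `c < S` pick `(x₀, t₀)` in the band with `c μ(B(x₀, t₀)) < (2t₀)^s`, then
`τ < t₀` with `c μ(B(x₀, t₀)) < (2τ)^s` and a cylinder `f_{w₀}(K)` inside `B(x₀, t₀ - τ)`, so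
that closed `τ`-balls centred in that cylinder lie in `B(x₀, t₀)`. A set that is backward
invariant under every `f_i` and avoided by a cylinder is `μ`-null, so `μ`-a.e. point has
addresses `u ++ w₀ ++ ⋯` with `|u|` arbitrarily large; transporting the bound by `f_u` gives
`c μ(B̄(y, r_u τ)) ≤ (2 r_u τ)^s`. The Besicovitch covering theorem turns such a.e. arbitrarily
small radii into packings, whence `P^s(K) ≥ c μ(K) = c`.
-/

open Topology

section Packing

variable {d : ℕ}

lemma packingMeasure_le_packCount (s : ℝ) {δ : ℝ} (hδ : 0 < δ) (E : Set (Euc d)) :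
    packingMeasure s E ≤ packCount s δ E := by
  have hempty : packingPre s (∅ : Set (Euc d)) = 0 :=
    le_antisymm ((iInf₂_le 1 one_pos).trans
      (iSup_le fun _ => iSup_le fun _ => iSup_le fun h => absurd (h.1 0) (notMem_empty _))) bot_le
  calc packingMeasure s E ≤ ∑' n, packingPre s (if n = 0 then E else ∅) :=
        iInf₂_le _ fun x hx => mem_iUnion.2 ⟨0, by simpa using hx⟩
    _ = packingPre s E := by simp [apply_ite, hempty]
    _ ≤ packCount s δ E := iInf₂_le δ hδ

lemma packCount_le_mul_measure_univ (μ : Measure (Euc d)) {s δ : ℝ} {E : Set (Euc d)}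
    {C : ℝ≥0∞} (h : ∀ x ∈ E, ∀ ρ, 0 < ρ → ρ ≤ δ → ENNReal.ofReal ((2 * ρ) ^ s) ≤ C * μ (ball x ρ)) :
    packCount s δ E ≤ C * μ univ := by
  refine iSup_le fun c => iSup_le fun ρ => iSup_le fun ⟨hc, hρ, hdisj⟩ => ?_
  calc ∑' n, (if 0 < ρ n then ENNReal.ofReal ((2 * ρ n) ^ s) else 0)
      ≤ ∑' n, C * μ (ball (c n) (ρ n)) := ENNReal.tsum_le_tsum fun n => by
        split_ifs with hn
        · exact h _ (hc n) _ hn (hρ n).2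
        · exact zero_le
    _ = C * μ (⋃ n, ball (c n) (ρ n)) := by
        rw [ENNReal.tsum_mul_left, measure_iUnion (fun m n hmn => hdisj m n hmn)
          fun n => measurableSet_ball]
    _ ≤ C * μ univ := by gcongr; exact subset_univ _

lemma tsum_le_packCount {s δ : ℝ} {E t : Set (Euc d)} (ht : t.Countable) (htE : t ⊆ E)
    {ρ : Euc d → ℝ} (hρ : ∀ x ∈ t, 0 < ρ x ∧ ρ x ≤ δ)
    (hdisj : t.PairwiseDisjoint fun x => closedBall x (ρ x)) :
    ∑' x : t, ENNReal.ofReal ((2 * ρ x) ^ s) ≤ packCount s δ E := by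
  rcases t.eq_empty_or_nonempty with rfl | ⟨x₀, hx₀⟩
  · simp
  have := ht.to_subtype
  obtain ⟨g, hg⟩ := exists_injective_nat t
  -- enumerate `t` by `g`, padding the remaining indices with empty balls at `x₀`
  let c : ℕ → Euc d := Function.extend g (↑) fun _ => x₀
  let ρ' : ℕ → ℝ := Function.extend g (fun x => ρ x) 0
  have hc : ∀ x, c (g x) = x := fun x => hg.extend_apply _ _ x
  have hρ' : ∀ x, ρ' (g x) = ρ x := fun x => hg.extend_apply _ _ x
  have hρ'0 : ∀ n, n ∉ range g → ρ' n = 0 := fun n hn =>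
    Function.extend_apply' _ _ _ fun ⟨x, hx⟩ => hn ⟨x, hx⟩
  have hpack : IsPacking δ E c ρ' := by
    refine ⟨fun n => ?_, fun n => ?_, fun m n hmn => ?_⟩
    · by_cases hn : n ∈ range g
      · obtain ⟨x, rfl⟩ := hn; rw [hc]; exact htE x.2
      · rw [show c n = x₀ from Function.extend_apply' _ _ _ fun ⟨x, hx⟩ => hn ⟨x, hx⟩]
        exact htE hx₀
    · by_cases hn : n ∈ range g
      · obtain ⟨x, rfl⟩ := hn; rw [hρ']; exact ⟨(hρ x x.2).1.le, (hρ x x.2).2⟩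
      · rw [hρ'0 n hn]; exact ⟨le_rfl, (hρ x₀ hx₀).1.le.trans (hρ x₀ hx₀).2⟩
    · by_cases hm : m ∈ range g
      · by_cases hn : n ∈ range g
        · obtain ⟨x, rfl⟩ := hm
          obtain ⟨y, rfl⟩ := hn
          rw [hc, hc, hρ', hρ']
          have hxy : (x : Euc d) ≠ y := fun h => hmn (congrArg g (Subtype.ext h))
          exact (hdisj x.2 y.2 hxy).mono ball_subset_closedBall ball_subset_closedBall
        · rw [hρ'0 n hn, ball_zero]; exact disjoint_empty _
      · rw [hρ'0 m hm, ball_zero]; exact empty_disjoint _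
  calc ∑' x : t, ENNReal.ofReal ((2 * ρ x) ^ s)
      = ∑' n, if 0 < ρ' n then ENNReal.ofReal ((2 * ρ' n) ^ s) else 0 := by
        refine Eq.trans ?_ (hg.tsum_eq fun n hn => ?_)
        · exact tsum_congr fun x => by rw [hρ', if_pos (hρ x x.2).1]
        · by_contra hn'
          exact hn (by simp [hρ'0 n hn'])
    _ ≤ packCount s δ E := le_iSup₂_of_le c ρ' (le_iSup_of_le hpack le_rfl)

lemma mul_measure_le_packCount (μ : Measure (Euc d)) [SFinite μ] {s δ : ℝ} (hδ : 0 < δ)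
    {c : ℝ≥0∞} {T E : Set (Euc d)} (hTE : T ⊆ E)
    (hT : ∀ y ∈ T, ∃ᶠ ρ in 𝓝[>] 0, c * μ (closedBall y ρ) ≤ ENNReal.ofReal ((2 * ρ) ^ s)) :
    c * μ T ≤ packCount s δ E := by
  obtain ⟨t, ρ, htc, htT, hρ, hcover, hdisj⟩ := Besicovitch.exists_disjoint_closedBall_covering_ae μ
    (fun y => {ρ | c * μ (closedBall y ρ) ≤ ENNReal.ofReal ((2 * ρ) ^ s)}) T
    (fun y hy ε hε => ((hT y hy).and_eventually (Ioo_mem_nhdsGT hε)).exists) (fun _ => δ)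
    (fun _ _ => hδ)
  calc c * μ T ≤ c * μ (⋃ x ∈ t, closedBall x (ρ x)) :=
        mul_le_mul_right (measure_mono_ae (ae_le_set.2 hcover)) _
    _ ≤ c * ∑' x : t, μ (closedBall x (ρ x)) := by gcongr; exact measure_biUnion_le μ htc _
    _ = ∑' x : t, c * μ (closedBall x (ρ x)) := ENNReal.tsum_mul_left.symm
    _ ≤ ∑' x : t, ENNReal.ofReal ((2 * ρ x) ^ s) := ENNReal.tsum_le_tsum fun x => (hρ x x.2).1
    _ ≤ packCount s δ E := tsum_le_packCount htc (htT.trans hTE)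
          (fun x hx => ⟨(hρ x hx).2.1, (hρ x hx).2.2.le⟩) hdisj

lemma mul_measure_le_packingMeasure (μ : Measure (Euc d)) [SFinite μ] {s : ℝ} {c : ℝ≥0∞}
    (h : ∀ᵐ y ∂μ, ∃ᶠ ρ in 𝓝[>] 0, c * μ (closedBall y ρ) ≤ ENNReal.ofReal ((2 * ρ) ^ s))
    (E : Set (Euc d)) :
    c * μ E ≤ packingMeasure s E := by
  set G := {y | ∃ᶠ ρ in 𝓝[>] 0, c * μ (closedBall y ρ) ≤ ENNReal.ofReal ((2 * ρ) ^ s)}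
  have hG : μ Gᶜ = 0 := h
  refine le_iInf₂ fun F hF => ?_
  calc c * μ E = c * μ (E ∩ G) := by rw [measure_inter_conull hG]
    _ ≤ c * μ (⋃ n, F n ∩ G) := by
        gcongr; rw [← iUnion_inter]; exact inter_subset_inter_left _ hF
    _ ≤ c * ∑' n, μ (F n ∩ G) := by gcongr; exact measure_iUnion_le _
    _ = ∑' n, c * μ (F n ∩ G) := ENNReal.tsum_mul_left.symm
    _ ≤ ∑' n, packingPre s (F n) := ENNReal.tsum_le_tsum fun n => le_iInf₂ fun δ hδ =>
          mul_measure_le_packCount μ hδ inter_subset_left fun y hy => hy.2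

end Packing

lemma ENNReal.ofReal_mul_rpow {a b : ℝ} (ha : 0 ≤ a) (hb : 0 ≤ b) (s : ℝ) :
    ENNReal.ofReal ((a * b) ^ s) = ENNReal.ofReal (a ^ s) * ENNReal.ofReal (b ^ s) := by
  rw [Real.mul_rpow ha hb, ENNReal.ofReal_mul (Real.rpow_nonneg ha s)]

lemma exists_forall_le_of_forall_lt_one {ι : Type*} [Finite ι] {r : ι → ℝ} (h : ∀ i, r i < 1) :
    ∃ q, 0 < q ∧ q < 1 ∧ ∀ i, r i ≤ q := by
  cases isEmpty_or_nonempty ι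
  · exact ⟨1 / 2, by norm_num, by norm_num, fun i => isEmptyElim i⟩
  · obtain ⟨i₀, hi₀⟩ := Finite.exists_max r
    exact ⟨max (r i₀) (1 / 2), by positivity, max_lt (h i₀) (by norm_num),
      fun i => (hi₀ i).trans (le_max_left _ _)⟩

lemma exists_lt_ofReal_rpow_of_lt {s : ℝ} {a : ℝ≥0∞} {t : ℝ} (ht : 0 < t)
    (h : a < ENNReal.ofReal ((2 * t) ^ s)) :
    ∃ τ ∈ Ioo 0 t, a < ENNReal.ofReal ((2 * τ) ^ s) := by
  have hcont : ContinuousAt (fun τ : ℝ => ENNReal.ofReal ((2 * τ) ^ s)) t :=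
    ENNReal.continuous_ofReal.continuousAt.comp
      ((Real.continuousAt_rpow_const _ _ (Or.inl (by positivity))).comp (by fun_prop))
  obtain ⟨τ, hτ, hτt⟩ := (((hcont.eventually (lt_mem_nhds h)).filter_mono nhdsWithin_le_nhds).and
    (Ioo_mem_nhdsLT ht)).exists
  exact ⟨τ, hτt, hτ⟩

structure IsContractingSimilitudes {d N : ℕ} (f : Fin N → Euc d → Euc d) (r : Fin N → ℝ) :
    Prop where
  ratio_pos : ∀ i, 0 < r i
  ratio_lt_one : ∀ i, r i < 1
  dist_eq : ∀ i x y, dist (f i x) (f i y) = r i * dist x y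

def wratio {N : ℕ} (r : Fin N → ℝ) (w : List (Fin N)) : ℝ := (w.map r).prod

section Words

variable {d N : ℕ} {f : Fin N → Euc d → Euc d} {r : Fin N → ℝ}

@[simp] lemma wratio_nil : wratio r [] = 1 := rfl

@[simp] lemma wratio_cons (i : Fin N) (w : List (Fin N)) :
    wratio r (i :: w) = r i * wratio r w := List.prod_cons

@[simp] lemma wcomp_nil (x : Euc d) : wcomp f [] x = x := rfl

@[simp] lemma wcomp_cons (i : Fin N) (w : List (Fin N)) (x : Euc d) :
    wcomp f (i :: w) x = f i (wcomp f w x) := rfl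

lemma wcomp_append (u v : List (Fin N)) (x : Euc d) :
    wcomp f (u ++ v) x = wcomp f u (wcomp f v x) := by
  induction u with
  | nil => rfl
  | cons i u ih => simp [ih]

lemma mapsTo_of_eq_iUnion_image {K : Set (Euc d)} (hK : K = ⋃ i, f i '' K) (i : Fin N) :
    MapsTo (f i) K K := fun x hx => by
  rw [hK]
  exact mem_iUnion.2 ⟨i, mem_image_of_mem _ hx⟩

lemma mapsTo_wcomp {K : Set (Euc d)} (hK : K = ⋃ i, f i '' K) (w : List (Fin N)) :
    MapsTo (wcomp f w) K K := by
  induction w with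
  | nil => exact mapsTo_id K
  | cons i w ih => exact (mapsTo_of_eq_iUnion_image hK i).comp ih

lemma exists_length_eq_mem_image_wcomp {K : Set (Euc d)} (hK : K = ⋃ i, f i '' K) {x : Euc d}
    (hx : x ∈ K) (k : ℕ) : ∃ w : List (Fin N), w.length = k ∧ x ∈ wcomp f w '' K := by
  induction k generalizing x with
  | zero => exact ⟨[], rfl, x, hx, rfl⟩
  | succ k ih =>
    rw [hK] at hx
    obtain ⟨i, y, hy, rfl⟩ := mem_iUnion.1 hx
    obtain ⟨w, hw, z, hz, rfl⟩ := ih hy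
    exact ⟨i :: w, by simp [hw], z, hz, rfl⟩

end Words

namespace IsContractingSimilitudes

variable {d N : ℕ} {f : Fin N → Euc d → Euc d} {r : Fin N → ℝ}

lemma wratio_pos (hf : IsContractingSimilitudes f r) (w : List (Fin N)) : 0 < wratio r w := by
  induction w with
  | nil => exact one_pos
  | cons i w ih => simpa using mul_pos (hf.ratio_pos i) ih

lemma wratio_le_pow (hf : IsContractingSimilitudes f r) {q : ℝ} (hq : ∀ i, r i ≤ q)
    (w : List (Fin N)) : wratio r w ≤ q ^ w.length := by
  induction w with
  | nil => simp
  | cons i w ih =>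
    rw [wratio_cons, List.length_cons, pow_succ']
    exact mul_le_mul (hq i) ih (hf.wratio_pos w).le ((hf.ratio_pos i).le.trans (hq i))

lemma wratio_le_one (hf : IsContractingSimilitudes f r) (w : List (Fin N)) : wratio r w ≤ 1 := by
  simpa using hf.wratio_le_pow (fun i => (hf.ratio_lt_one i).le) w

lemma pos_of_isLeast (hf : IsContractingSimilitudes f r) {rstar : ℝ}
    (hstar : IsLeast (range r) rstar) : 0 < rstar := by
  obtain ⟨i, rfl⟩ := hstar.1
  exact hf.ratio_pos i

lemma ofReal_wratio_rpow_pos (hf : IsContractingSimilitudes f r) (s : ℝ) (w : List (Fin N)) :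
    0 < ENNReal.ofReal (wratio r w ^ s) :=
  ENNReal.ofReal_pos.2 (Real.rpow_pos_of_pos (hf.wratio_pos w) s)

lemma ofReal_rpow_wratio_mul (hf : IsContractingSimilitudes f r) {s : ℝ} (w : List (Fin N)) {t : ℝ}
    (ht : 0 ≤ t) :
    ENNReal.ofReal ((2 * (wratio r w * t)) ^ s)
      = ENNReal.ofReal (wratio r w ^ s) * ENNReal.ofReal ((2 * t) ^ s) := by
  rw [mul_left_comm, ENNReal.ofReal_mul_rpow (hf.wratio_pos w).le (by positivity)]

lemma dist_wcomp (hf : IsContractingSimilitudes f r) (w : List (Fin N)) (x y : Euc d) :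
    dist (wcomp f w x) (wcomp f w y) = wratio r w * dist x y := by
  induction w with
  | nil => simp
  | cons i w ih => simp [hf.dist_eq, ih, mul_assoc]

lemma continuous_wcomp (hf : IsContractingSimilitudes f r) (w : List (Fin N)) :
    Continuous (wcomp f w) :=
  (LipschitzWith.of_dist_le_mul fun x y => by
    rw [hf.dist_wcomp, Real.coe_toNNReal _ (hf.wratio_pos w).le]).continuous

lemma continuous (hf : IsContractingSimilitudes f r) (i : Fin N) : Continuous (f i) :=
  hf.continuous_wcomp [i]

lemma preimage_wcomp_ball (hf : IsContractingSimilitudes f r) (w : List (Fin N)) (x : Euc d)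
    (t : ℝ) : wcomp f w ⁻¹' ball (wcomp f w x) (wratio r w * t) = ball x t := by
  ext y
  simp [hf.dist_wcomp, hf.wratio_pos w]

lemma preimage_wcomp_closedBall (hf : IsContractingSimilitudes f r) (w : List (Fin N))
    (x : Euc d) (t : ℝ) :
    wcomp f w ⁻¹' closedBall (wcomp f w x) (wratio r w * t) = closedBall x t := by
  ext y
  simp [hf.dist_wcomp, hf.wratio_pos w]

lemma exists_image_wcomp_subset_ball (hf : IsContractingSimilitudes f r) {K : Set (Euc d)}
    (hK : K = ⋃ i, f i '' K) (hKc : IsCompact K) {x : Euc d} (hx : x ∈ K) {ε : ℝ}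
    (hε : 0 < ε) : ∃ w : List (Fin N), wcomp f w '' K ⊆ ball x ε := by
  obtain ⟨q, hq0, hq1, hq⟩ := exists_forall_le_of_forall_lt_one hf.ratio_lt_one
  obtain ⟨k, hk⟩ := exists_pow_lt_of_lt_one (div_pos hε (by positivity : 0 < diam K + 1)) hq1
  obtain ⟨w, rfl, y, hy, rfl⟩ := exists_length_eq_mem_image_wcomp hK hx k
  refine ⟨w, ?_⟩
  rw [lt_div_iff₀ (by positivity)] at hk
  rintro _ ⟨z, hz, rfl⟩
  rw [mem_ball, hf.dist_wcomp]
  calc wratio r w * dist z y ≤ q ^ w.length * (diam K + 1) := by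
        gcongr
        · exact hf.wratio_le_pow hq w
        · linarith [dist_le_diam_of_mem hKc.isBounded hz hy]
    _ < ε := hk

lemma exists_wcomp_eq_div_wratio_mem_Icc (hf : IsContractingSimilitudes f r) {K : Set (Euc d)}
    (hK : K = ⋃ i, f i '' K) {rstar : ℝ} (hstar : IsLeast (range r) rstar) {b : ℝ} (hb : 0 < b)
    {x : Euc d} (hx : x ∈ K) {ρ : ℝ} (hρ : 0 < ρ) (hρb : ρ ≤ b) :
    ∃ w y, y ∈ K ∧ wcomp f w y = x ∧ ρ / wratio r w ∈ Icc (rstar * b) b := by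
  obtain ⟨q, hq0, hq1, hq⟩ := exists_forall_le_of_forall_lt_one hf.ratio_lt_one
  have hband : 0 < rstar * b := mul_pos (hf.pos_of_isLeast hstar) hb
  obtain ⟨n, hn⟩ := exists_pow_lt_of_lt_one (div_pos hρ hband) hq1
  rw [lt_div_iff₀ hband] at hn
  induction n generalizing x ρ with
  | zero => exact ⟨[], x, hx, rfl, by simpa using hn.le, by simpa using hρb⟩
  | succ n ih =>
    by_cases hlow : rstar * b ≤ ρ
    · exact ⟨[], x, hx, rfl, by simpa using hlow, by simpa using hρb⟩
    rw [hK] at hx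
    obtain ⟨i, x', hx', rfl⟩ := mem_iUnion.1 hx
    have hri := hf.ratio_pos i
    have hρi : ρ / r i ≤ b := by
      rw [div_le_iff₀ hri]
      nlinarith [hstar.2 (mem_range_self i)]
    have hnρi : q ^ n * (rstar * b) < ρ / r i := by
      rw [lt_div_iff₀ hri]
      calc q ^ n * (rstar * b) * r i ≤ q ^ n * (rstar * b) * q := by gcongr; exact hq i
        _ = q ^ (n + 1) * (rstar * b) := by ring
        _ < ρ := hn
    obtain ⟨w, y, hy, rfl, hw⟩ := ih hx' (div_pos hρ hri) hρi hnρi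
    exact ⟨i :: w, y, hy, rfl, by rwa [wratio_cons, ← div_div]⟩

end IsContractingSimilitudes

def IsSelfSimilarMeasure {d N : ℕ} (f : Fin N → Euc d → Euc d) (r : Fin N → ℝ) (s : ℝ)
    (μ : Measure (Euc d)) : Prop :=
  ∀ A : Set (Euc d), MeasurableSet A → μ A = ∑ i, ENNReal.ofReal (r i ^ s) * μ (f i ⁻¹' A)

def StronglySeparated {d N : ℕ} (f : Fin N → Euc d → Euc d) (K : Set (Euc d)) (Δ : ℝ) : Prop :=
  ∀ i j, i ≠ j → ∀ p ∈ f i '' K, ∀ q ∈ f j '' K, Δ < dist p q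

def invDensitySup {d : ℕ} (μ : Measure (Euc d)) (s : ℝ) (K : Set (Euc d)) (a b : ℝ) : ℝ≥0∞ :=
  ⨆ (x : Euc d) (_ : x ∈ K) (t : ℝ) (_ : t ∈ Icc a b), ENNReal.ofReal ((2 * t) ^ s) / μ (ball x t)

/-- The points with an address `u ++ w₀ ++ ⋯`, `|u| = k`: an occurrence of `w₀` at
position `k`. -/
def occurrenceSet {d N : ℕ} (f : Fin N → Euc d → Euc d) (K : Set (Euc d)) (w₀ : List (Fin N))
    (k : ℕ) : Set (Euc d) :=
  ⋃ u ∈ {u : List (Fin N) | u.length = k}, wcomp f (u ++ w₀) '' K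

lemma mem_occurrenceSet {d N : ℕ} {f : Fin N → Euc d → Euc d} {K : Set (Euc d)}
    {w₀ : List (Fin N)} {k : ℕ} {y : Euc d} :
    y ∈ occurrenceSet f K w₀ k ↔
      ∃ u : List (Fin N), u.length = k ∧ ∃ z ∈ K, wcomp f (u ++ w₀) z = y := by
  simp [occurrenceSet]

namespace IsSelfSimilarMeasure

variable {d N : ℕ} {f : Fin N → Euc d → Euc d} {r : Fin N → ℝ} {s : ℝ}
  {μ : Measure (Euc d)} {K : Set (Euc d)} {Δ : ℝ}

lemma measure_eq_sum_wcomp (hμ : IsSelfSimilarMeasure f r s μ)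
    (hf : IsContractingSimilitudes f r) (L : ℕ) {A : Set (Euc d)} (hA : MeasurableSet A) :
    μ A = ∑ v : Fin L → Fin N,
      ENNReal.ofReal (wratio r (List.ofFn v) ^ s) * μ (wcomp f (List.ofFn v) ⁻¹' A) := by
  induction L generalizing A with
  | zero => simp [wcomp]
  | succ L ih =>
    rw [hμ A hA, ← (Fin.consEquiv fun _ => Fin N).sum_comp, Fintype.sum_prod_type]
    refine Finset.sum_congr rfl fun i _ => ?_
    simp only [Fin.consEquiv, Equiv.coe_fn_mk, List.ofFn_cons, wratio_cons,
      ENNReal.ofReal_mul_rpow (hf.ratio_pos i).le (hf.wratio_pos _).le, mul_assoc,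
      ← Finset.mul_sum]
    rw [ih (hA.preimage (hf.continuous i).measurable)]
    rfl

lemma ofReal_wratio_rpow_mul_le_measure_image (hμ : IsSelfSimilarMeasure f r s μ)
    (hf : IsContractingSimilitudes f r) {T : Set (Euc d)} (hT : IsCompact T) (w : List (Fin N)) :
    ENNReal.ofReal (wratio r w ^ s) * μ T ≤ μ (wcomp f w '' T) := by
  have hterm := Finset.single_le_sum (f := fun v : Fin w.length → Fin N =>
    ENNReal.ofReal (wratio r (List.ofFn v) ^ s) * μ (wcomp f (List.ofFn v) ⁻¹' (wcomp f w '' T)))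
    (fun _ _ => zero_le) (Finset.mem_univ w.get)
  simp only [List.ofFn_get] at hterm
  rw [hμ.measure_eq_sum_wcomp hf w.length (hT.image (hf.continuous_wcomp w)).isClosed.measurableSet]
  exact (mul_le_mul_right (measure_mono (subset_preimage_image _ _)) _).trans hterm

lemma measure_eq_ofReal_mul_preimage (hμ : IsSelfSimilarMeasure f r s μ)
    (hsep : StronglySeparated f K Δ) (hKμ : μ Kᶜ = 0) {i : Fin N} {x : Euc d} (hx : x ∈ K)
    {A : Set (Euc d)} (hA : MeasurableSet A) (hAx : A ⊆ closedBall (f i x) Δ) :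
    μ A = ENNReal.ofReal (r i ^ s) * μ (f i ⁻¹' A) := by
  rw [hμ A hA, Finset.sum_eq_single i _ (by simp)]
  intro j _ hji
  have hempty : f j ⁻¹' A ∩ K = ∅ := by
    refine eq_empty_of_forall_notMem fun y ⟨hyA, hyK⟩ => ?_
    exact (hsep i j (Ne.symm hji) _ (mem_image_of_mem _ hx) _ (mem_image_of_mem _ hyK)).not_ge
      (mem_closedBall'.1 (hAx hyA))
  rw [← measure_inter_conull hKμ, hempty, measure_empty, mul_zero]

lemma measure_eq_ofReal_wratio_mul_preimage (hμ : IsSelfSimilarMeasure f r s μ)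
    (hf : IsContractingSimilitudes f r) (hK : K = ⋃ i, f i '' K) (hsep : StronglySeparated f K Δ)
    (hKμ : μ Kᶜ = 0) {x : Euc d} (hx : x ∈ K) {t : ℝ} (ht : 0 ≤ t) (htΔ : t ≤ Δ)
    (w : List (Fin N)) {A : Set (Euc d)} (hA : MeasurableSet A)
    (hAx : A ⊆ closedBall (wcomp f w x) (wratio r w * t)) :
    μ A = ENNReal.ofReal (wratio r w ^ s) * μ (wcomp f w ⁻¹' A) := by
  induction w generalizing A with
  | nil => simp [wcomp]
  | cons i w ih =>
    have hri := hf.ratio_pos i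
    have hradius : r i * wratio r w * t ≤ Δ := by
      have := mul_le_one₀ (hf.ratio_lt_one i).le (hf.wratio_pos w).le (hf.wratio_le_one w)
      nlinarith
    have hpre : f i ⁻¹' A ⊆ closedBall (wcomp f w x) (wratio r w * t) := fun y hy => by
      have := mem_closedBall.1 (hAx hy)
      rw [wcomp_cons, hf.dist_eq, wratio_cons, mul_assoc] at this
      exact mem_closedBall.2 (le_of_mul_le_mul_left this hri)
    rw [hμ.measure_eq_ofReal_mul_preimage hsep hKμ (mapsTo_wcomp hK w hx) hA
      (hAx.trans (closedBall_subset_closedBall (by simpa [mul_assoc] using hradius))),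
      ih (hA.preimage (hf.continuous i).measurable) hpre, wratio_cons,
      ENNReal.ofReal_mul_rpow hri.le (hf.wratio_pos w).le, mul_assoc]
    rfl

lemma measure_ball_wcomp (hμ : IsSelfSimilarMeasure f r s μ) (hf : IsContractingSimilitudes f r)
    (hK : K = ⋃ i, f i '' K) (hsep : StronglySeparated f K Δ) (hKμ : μ Kᶜ = 0) {x : Euc d}
    (hx : x ∈ K) {t : ℝ} (ht : 0 ≤ t) (htΔ : t ≤ Δ) (w : List (Fin N)) :
    μ (ball (wcomp f w x) (wratio r w * t)) = ENNReal.ofReal (wratio r w ^ s) * μ (ball x t) := by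
  rw [hμ.measure_eq_ofReal_wratio_mul_preimage hf hK hsep hKμ hx ht htΔ w measurableSet_ball
    ball_subset_closedBall, hf.preimage_wcomp_ball]

lemma measure_closedBall_wcomp (hμ : IsSelfSimilarMeasure f r s μ)
    (hf : IsContractingSimilitudes f r) (hK : K = ⋃ i, f i '' K) (hsep : StronglySeparated f K Δ)
    (hKμ : μ Kᶜ = 0) {x : Euc d} (hx : x ∈ K) {t : ℝ} (ht : 0 ≤ t) (htΔ : t ≤ Δ)
    (w : List (Fin N)) :
    μ (closedBall (wcomp f w x) (wratio r w * t))
      = ENNReal.ofReal (wratio r w ^ s) * μ (closedBall x t) := by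
  rw [hμ.measure_eq_ofReal_wratio_mul_preimage hf hK hsep hKμ hx ht htΔ w measurableSet_closedBall
    subset_rfl, hf.preimage_wcomp_closedBall]

variable [IsProbabilityMeasure μ]

lemma sum_ofReal_rpow (hμ : IsSelfSimilarMeasure f r s μ) :
    ∑ i, ENNReal.ofReal (r i ^ s) = 1 := by
  simpa using (hμ univ MeasurableSet.univ).symm

lemma sum_ofReal_wratio_rpow (hμ : IsSelfSimilarMeasure f r s μ)
    (hf : IsContractingSimilitudes f r) (L : ℕ) :
    ∑ v : Fin L → Fin N, ENNReal.ofReal (wratio r (List.ofFn v) ^ s) = 1 := by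
  simpa using (hμ.measure_eq_sum_wcomp hf L MeasurableSet.univ).symm

lemma nonempty_index (hμ : IsSelfSimilarMeasure f r s μ) : Nonempty (Fin N) := by
  by_contra h
  rw [not_nonempty_iff] at h
  simpa using hμ univ MeasurableSet.univ

/-- Expanding `μ E` along the words of length `|w|`, the term of `w` vanishes while every
other term is at most `r_v^s μ E`; so `μ E ≤ (1 - r_w^s) μ E`. -/
lemma measure_eq_zero_of_preimage_subset (hμ : IsSelfSimilarMeasure f r s μ)
    (hf : IsContractingSimilitudes f r) {E : Set (Euc d)} (hE : MeasurableSet E)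
    (hinv : ∀ i, f i ⁻¹' E ⊆ E) (w : List (Fin N)) (hw : μ (wcomp f w ⁻¹' E) = 0) :
    μ E = 0 := by
  have hinv' : ∀ v : List (Fin N), wcomp f v ⁻¹' E ⊆ E := by
    intro v
    induction v with
    | nil => exact subset_rfl
    | cons i v ih => exact fun y hy => ih (hinv i hy)
  have hw' : List.ofFn w.get = w := List.ofFn_get w
  have hexp := hμ.measure_eq_sum_wcomp hf w.length hE
  rw [← Finset.add_sum_erase _ _ (Finset.mem_univ w.get), hw', hw, mul_zero, zero_add] at hexp
  have hsum := hμ.sum_ofReal_wratio_rpow hf w.length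
  rw [← Finset.add_sum_erase _ _ (Finset.mem_univ w.get), hw'] at hsum
  have hle : μ E + ENNReal.ofReal (wratio r w ^ s) * μ E ≤ μ E + 0 :=
    calc μ E + ENNReal.ofReal (wratio r w ^ s) * μ E
        ≤ ∑ v ∈ Finset.univ.erase w.get, ENNReal.ofReal (wratio r (List.ofFn v) ^ s) * μ E
            + ENNReal.ofReal (wratio r w ^ s) * μ E := by
          gcongr
          nth_rewrite 1 [hexp]
          gcongr with v
          exact hinv' _
      _ = μ E + 0 := by rw [← Finset.sum_mul, ← add_mul, add_comm, hsum, one_mul, add_zero]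
  have hp := nonpos_iff_eq_zero.1 ((ENNReal.add_le_add_iff_left (measure_ne_top μ E)).1 hle)
  exact (mul_eq_zero.1 hp).resolve_left (hf.ofReal_wratio_rpow_pos s w).ne'

lemma measure_thickening_div_le (hμ : IsSelfSimilarMeasure f r s μ)
    (hf : IsContractingSimilitudes f r) (hK : K = ⋃ i, f i '' K) {q : ℝ} (hq0 : 0 < q)
    (hq : ∀ i, r i ≤ q) (ε : ℝ) :
    μ (thickening (ε / q) K) ≤ μ (thickening ε K) := by
  have hsub : ∀ i, thickening (ε / q) K ⊆ f i ⁻¹' thickening ε K := by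
    intro i y hy
    obtain ⟨z, hz, hyz⟩ := mem_thickening_iff.1 hy
    rw [mem_preimage, mem_thickening_iff]
    refine ⟨f i z, mapsTo_of_eq_iUnion_image hK i hz, ?_⟩
    calc dist (f i y) (f i z) = r i * dist y z := hf.dist_eq i y z
      _ ≤ q * dist y z := by gcongr; exact hq i
      _ < q * (ε / q) := by gcongr
      _ = ε := by field_simp
  calc μ (thickening (ε / q) K)
      = ∑ i, ENNReal.ofReal (r i ^ s) * μ (thickening (ε / q) K) := by
        rw [← Finset.sum_mul, hμ.sum_ofReal_rpow, one_mul]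
    _ ≤ ∑ i, ENNReal.ofReal (r i ^ s) * μ (f i ⁻¹' thickening ε K) := by
        gcongr with i; exact hsub i
    _ = μ (thickening ε K) := (hμ _ isOpen_thickening.measurableSet).symm

lemma measure_thickening_eq_one (hμ : IsSelfSimilarMeasure f r s μ)
    (hf : IsContractingSimilitudes f r) (hK : K = ⋃ i, f i '' K) (hKne : K.Nonempty) {ε : ℝ}
    (hε : 0 < ε) : μ (thickening ε K) = 1 := by
  obtain ⟨q, hq0, hq1, hq⟩ := exists_forall_le_of_forall_lt_one hf.ratio_lt_one
  have hle : ∀ k : ℕ, μ (thickening (ε / q ^ k) K) ≤ μ (thickening ε K) := by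
    intro k
    induction k with
    | zero => simp
    | succ k ih =>
      rw [pow_succ, ← div_div]
      exact (hμ.measure_thickening_div_le hf hK hq0 hq _).trans ih
  have hmono : Monotone fun k : ℕ => thickening (ε / q ^ k) K := fun a b hab =>
    thickening_mono (div_le_div_of_nonneg_left hε.le (by positivity)
      (pow_le_pow_of_le_one hq0.le hq1.le hab)) K
  have hcover : ⋃ k : ℕ, thickening (ε / q ^ k) K = univ := by
    obtain ⟨z, hz⟩ := hKne
    refine eq_univ_of_forall fun y => ?_
    obtain ⟨k, hk⟩ := exists_pow_lt_of_lt_one (div_pos hε (by positivity : 0 < dist y z + 1)) hq1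
    rw [lt_div_iff₀ (by positivity)] at hk
    refine mem_iUnion.2 ⟨k, mem_thickening_iff.2 ⟨z, hz, ?_⟩⟩
    rw [lt_div_iff₀ (by positivity)]
    nlinarith [pow_pos hq0 k]
  refine le_antisymm prob_le_one ?_
  calc 1 = μ (⋃ k : ℕ, thickening (ε / q ^ k) K) := by rw [hcover, measure_univ]
    _ = ⨆ k : ℕ, μ (thickening (ε / q ^ k) K) := hmono.measure_iUnion
    _ ≤ μ (thickening ε K) := iSup_le hle

lemma measure_compl_attractor (hμ : IsSelfSimilarMeasure f r s μ)
    (hf : IsContractingSimilitudes f r) (hK : K = ⋃ i, f i '' K) (hKc : IsCompact K)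
    (hKne : K.Nonempty) : μ Kᶜ = 0 := by
  have hlim := tendsto_measure_thickening_of_isClosed ⟨1, one_pos, measure_ne_top μ _⟩ hKc.isClosed
  have hK1 : μ K = 1 := by
    refine tendsto_nhds_unique hlim (tendsto_const_nhds.congr' ?_)
    filter_upwards [self_mem_nhdsWithin] with ε hε
    exact (hμ.measure_thickening_eq_one hf hK hKne hε).symm
  rwa [prob_compl_eq_zero_iff hKc.measurableSet]

lemma measure_ball_pos (hμ : IsSelfSimilarMeasure f r s μ) (hf : IsContractingSimilitudes f r)
    (hK : K = ⋃ i, f i '' K) (hKc : IsCompact K) (hKμ : μ Kᶜ = 0) {x : Euc d} (hx : x ∈ K)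
    {t : ℝ} (ht : 0 < t) : 0 < μ (ball x t) := by
  obtain ⟨w, hw⟩ := hf.exists_image_wcomp_subset_ball hK hKc hx ht
  rw [prob_compl_eq_zero_iff hKc.measurableSet] at hKμ
  calc 0 < ENNReal.ofReal (wratio r w ^ s) * μ K := by
        rw [hKμ, mul_one]; exact hf.ofReal_wratio_rpow_pos s w
    _ ≤ μ (wcomp f w '' K) := hμ.ofReal_wratio_rpow_mul_le_measure_image hf hKc w
    _ ≤ μ (ball x t) := measure_mono hw

lemma ofReal_rpow_le_invDensitySup_mul (hμ : IsSelfSimilarMeasure f r s μ)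
    (hf : IsContractingSimilitudes f r) (hK : K = ⋃ i, f i '' K) (hKc : IsCompact K)
    (hKμ : μ Kᶜ = 0) {a b : ℝ} {x : Euc d} (hx : x ∈ K) {t : ℝ} (ht : t ∈ Icc a b)
    (ht0 : 0 < t) :
    ENNReal.ofReal ((2 * t) ^ s) ≤ invDensitySup μ s K a b * μ (ball x t) :=
  (ENNReal.div_le_iff_le_mul (Or.inl (hμ.measure_ball_pos hf hK hKc hKμ hx ht0).ne')
    (Or.inl (measure_ne_top μ _))).1 (le_iSup₂_of_le x hx (le_iSup₂_of_le t ht le_rfl))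

lemma packingMeasure_le_invDensitySup (hμ : IsSelfSimilarMeasure f r s μ)
    (hf : IsContractingSimilitudes f r) (hK : K = ⋃ i, f i '' K) (hKc : IsCompact K)
    (hsep : StronglySeparated f K Δ) (hKμ : μ Kᶜ = 0) {rstar : ℝ}
    (hstar : IsLeast (range r) rstar) {b : ℝ} (hb : 0 < b) (hbΔ : b ≤ Δ) :
    packingMeasure s K ≤ invDensitySup μ s K (rstar * b) b := by
  have hdensity : ∀ x ∈ K, ∀ ρ, 0 < ρ → ρ ≤ b →
      ENNReal.ofReal ((2 * ρ) ^ s) ≤ invDensitySup μ s K (rstar * b) b * μ (ball x ρ) := by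
    intro x hx ρ hρ hρb
    obtain ⟨w, y, hy, rfl, ht⟩ := hf.exists_wcomp_eq_div_wratio_mem_Icc hK hstar hb hx hρ hρb
    have hw := hf.wratio_pos w
    have ht0 : 0 < ρ / wratio r w := div_pos hρ hw
    rw [← mul_div_cancel₀ ρ hw.ne', hf.ofReal_rpow_wratio_mul w ht0.le,
      hμ.measure_ball_wcomp hf hK hsep hKμ hy ht0.le (ht.2.trans hbΔ), mul_left_comm]
    gcongr
    exact hμ.ofReal_rpow_le_invDensitySup_mul hf hK hKc hKμ hy ht ht0
  calc packingMeasure s K ≤ packCount s b K := packingMeasure_le_packCount s hb K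
    _ ≤ invDensitySup μ s K (rstar * b) b * μ univ := packCount_le_mul_measure_univ μ hdensity
    _ = invDensitySup μ s K (rstar * b) b := by
        rw [measure_univ, mul_one]

lemma ae_frequently_mem_occurrenceSet (hμ : IsSelfSimilarMeasure f r s μ)
    (hf : IsContractingSimilitudes f r) (hKc : IsCompact K) (hKμ : μ Kᶜ = 0)
    (w₀ : List (Fin N)) : ∀ᵐ y ∂μ, ∃ᶠ k in atTop, y ∈ occurrenceSet f K w₀ k := by
  have hclosed : ∀ k, IsClosed (occurrenceSet f K w₀ k) := fun k =>
    ((List.finite_length_eq (Fin N) k).isCompact_biUnion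
      fun u _ => hKc.image (hf.continuous_wcomp _)).isClosed
  obtain ⟨i₀⟩ := hμ.nonempty_index
  have hnull : ∀ j, ∀ᵐ y ∂μ, ∃ k ≥ j, y ∈ occurrenceSet f K w₀ k := by
    intro j
    rw [ae_iff]
    refine hμ.measure_eq_zero_of_preimage_subset hf ?_ ?_ (List.replicate j i₀ ++ w₀) ?_
    · have : {y | ¬∃ k ≥ j, y ∈ occurrenceSet f K w₀ k} = ⋂ k ≥ j, (occurrenceSet f K w₀ k)ᶜ := by
        ext; simp
      rw [this]
      exact MeasurableSet.biInter (to_countable _) fun k _ => (hclosed k).measurableSet.compl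
    · rintro i y hy ⟨k, hk, hyk⟩
      obtain ⟨u, rfl, z, hz, rfl⟩ := mem_occurrenceSet.1 hyk
      exact hy ⟨u.length + 1, by omega, mem_occurrenceSet.2 ⟨i :: u, rfl, z, hz, rfl⟩⟩
    · rw [← measure_inter_conull hKμ]
      convert measure_empty (μ := μ)
      refine eq_empty_of_forall_notMem fun z ⟨hz, hzK⟩ => hz ⟨j, le_rfl, ?_⟩
      exact mem_occurrenceSet.2 ⟨List.replicate j i₀, List.length_replicate, z, hzK, rfl⟩
  filter_upwards [ae_all_iff.2 hnull] with y hy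
  exact frequently_atTop.2 hy

lemma ae_frequently_mul_measure_closedBall_le (hμ : IsSelfSimilarMeasure f r s μ)
    (hf : IsContractingSimilitudes f r) (hK : K = ⋃ i, f i '' K) (hKc : IsCompact K)
    (hsep : StronglySeparated f K Δ) (hKμ : μ Kᶜ = 0) {a b : ℝ} (ha : 0 < a) (hbΔ : b ≤ Δ)
    {c : ℝ≥0∞} (hc : c < invDensitySup μ s K a b) :
    ∀ᵐ y ∂μ, ∃ᶠ ρ in 𝓝[>] 0, c * μ (closedBall y ρ) ≤ ENNReal.ofReal ((2 * ρ) ^ s) := by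
  simp only [invDensitySup, lt_iSup_iff] at hc
  obtain ⟨x₀, hx₀, t₀, ht₀, hc⟩ := hc
  have ht₀pos : 0 < t₀ := ha.trans_le ht₀.1
  rw [ENNReal.lt_div_iff_mul_lt (Or.inl (hμ.measure_ball_pos hf hK hKc hKμ hx₀ ht₀pos).ne')
    (Or.inl (measure_ne_top μ _))] at hc
  obtain ⟨τ, ⟨hτ0, hτt₀⟩, hcτ⟩ := exists_lt_ofReal_rpow_of_lt ht₀pos hc
  obtain ⟨w₀, hw₀⟩ := hf.exists_image_wcomp_subset_ball hK hKc hx₀ (sub_pos.2 hτt₀)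
  obtain ⟨q, hq0, hq1, hq⟩ := exists_forall_le_of_forall_lt_one hf.ratio_lt_one
  filter_upwards [hμ.ae_frequently_mem_occurrenceSet hf hKc hKμ w₀] with y hy
  refine frequently_iff.2 fun {U} hU => ?_
  obtain ⟨δ, hδ, hδU⟩ := mem_nhdsGT_iff_exists_Ioo_subset.1 hU
  obtain ⟨j, hj⟩ := exists_pow_lt_of_lt_one (div_pos hδ hτ0) hq1
  obtain ⟨k, hjk, hyk⟩ := frequently_atTop.1 hy j
  obtain ⟨u, rfl, z, hz, rfl⟩ := mem_occurrenceSet.1 hyk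
  have hz' : wcomp f w₀ z ∈ K := mapsTo_wcomp hK w₀ hz
  have hball : closedBall (wcomp f w₀ z) τ ⊆ ball x₀ t₀ := by
    refine (closedBall_subset_ball' ?_)
    linarith [mem_ball.1 (hw₀ (mem_image_of_mem _ hz))]
  have hu := hf.wratio_pos u
  refine ⟨wratio r u * τ, hδU ⟨by positivity, ?_⟩, ?_⟩
  · calc wratio r u * τ ≤ q ^ j * τ := by
          gcongr
          exact (hf.wratio_le_pow hq u).trans (pow_le_pow_of_le_one hq0.le hq1.le hjk)
      _ < δ := by rwa [lt_div_iff₀ hτ0] at hj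
  · rw [wcomp_append, hμ.measure_closedBall_wcomp hf hK hsep hKμ hz' hτ0.le (hτt₀.le.trans
      (ht₀.2.trans hbΔ)), hf.ofReal_rpow_wratio_mul u hτ0.le, mul_left_comm]
    gcongr
    exact (mul_le_mul_right (measure_mono hball) c).trans hcτ.le

lemma invDensitySup_le_packingMeasure (hμ : IsSelfSimilarMeasure f r s μ)
    (hf : IsContractingSimilitudes f r) (hK : K = ⋃ i, f i '' K) (hKc : IsCompact K)
    (hsep : StronglySeparated f K Δ) (hKμ : μ Kᶜ = 0) {a b : ℝ} (ha : 0 < a) (hbΔ : b ≤ Δ) :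
    invDensitySup μ s K a b ≤ packingMeasure s K := by
  refine le_of_forall_lt_imp_le_of_dense fun c hc => ?_
  have := mul_measure_le_packingMeasure μ
    (hμ.ae_frequently_mul_measure_closedBall_le hf hK hKc hsep hKμ ha hbΔ hc) K
  rwa [(prob_compl_eq_zero_iff hKc.measurableSet).1 hKμ, mul_one] at this

end IsSelfSimilarMeasure

theorem stmt9_general
    {d N : ℕ}
    (f : Fin N → Euc d → Euc d) (r : Fin N → ℝ)
    (hr0 : ∀ i, 0 < r i) (hr1 : ∀ i, r i < 1)
    (hsim : ∀ i x y, dist (f i x) (f i y) = r i * dist x y)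
    (K : Set (Euc d)) (hKne : K.Nonempty) (hKc : IsCompact K)
    (hKinv : K = ⋃ i, f i '' K)
    (Δ : ℝ) (hΔ : 0 < Δ)
    (hsep : ∀ i j, i ≠ j → ∀ p ∈ f i '' K, ∀ q ∈ f j '' K, Δ < dist p q)
    (rstar : ℝ) (hstar : IsLeast (Set.range r) rstar)
    (s : ℝ)
    (μ : Measure (Euc d)) (hμp : IsProbabilityMeasure μ)
    (hμss : ∀ A : Set (Euc d), MeasurableSet A →
      μ A = ∑ i, ENNReal.ofReal (r i ^ s) * μ (f i ⁻¹' A)) :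
    packingMeasure s K
      = ⨆ (x : Euc d) (_ : x ∈ K) (t : ℝ) (_ : t ∈ Set.Icc (rstar * Δ / 2) (Δ / 2)),
          ENNReal.ofReal ((2 * t) ^ s) / μ (ball x t) := by
  have hf : IsContractingSimilitudes f r := ⟨hr0, hr1, hsim⟩
  have hμ : IsSelfSimilarMeasure f r s μ := hμss
  have hKμ : μ Kᶜ = 0 := hμ.measure_compl_attractor hf hKinv hKc hKne
  change packingMeasure s K = invDensitySup μ s K (rstar * Δ / 2) (Δ / 2)
  rw [mul_div_assoc]
  have hb : Δ / 2 ≤ Δ := half_le_self hΔ.le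
  exact le_antisymm
    (hμ.packingMeasure_le_invDensitySup hf hKinv hKc hsep hKμ hstar (half_pos hΔ) hb)
    (hμ.invDensitySup_le_packingMeasure hf hKinv hKc hsep hKμ
      (mul_pos (hf.pos_of_isLeast hstar) (half_pos hΔ)) hb)

/-- Corollary 2.5: if the pieces `f_i(K)` are pairwise at distance
`> Δ`, then `P^s(K) = sup { (2r)^s/λ(B(x,r)) : x ∈ K, r_*Δ/2 ≤ r ≤ Δ/2 }`. -/
theorem stmt9
    {d N : ℕ} (hN : 2 ≤ N)
    (f : Fin N → Euc d → Euc d) (r : Fin N → ℝ)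
    (hr0 : ∀ i, 0 < r i) (hr1 : ∀ i, r i < 1)
    (hsim : ∀ i x y, dist (f i x) (f i y) = r i * dist x y)
    (K : Set (Euc d)) (hKne : K.Nonempty) (hKc : IsCompact K)
    (hKinv : K = ⋃ i, f i '' K)
    (Δ : ℝ) (hΔ : 0 < Δ)
    (hsep : ∀ i j, i ≠ j → ∀ p ∈ f i '' K, ∀ q ∈ f j '' K, Δ < dist p q)
    (rstar : ℝ) (hstar : IsLeast (Set.range r) rstar)
    (hgp : GeneralPosition K)
    (s : ℝ) (hs : ∑ i, r i ^ s = 1)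
    (μ : Measure (Euc d)) (hμp : IsProbabilityMeasure μ)
    (hμss : ∀ A : Set (Euc d), MeasurableSet A →
      μ A = ∑ i, ENNReal.ofReal (r i ^ s) * μ (f i ⁻¹' A)) :
    packingMeasure s K
      = ⨆ (x : Euc d) (_ : x ∈ K) (t : ℝ) (_ : t ∈ Set.Icc (rstar * Δ / 2) (Δ / 2)),
          ENNReal.ofReal ((2 * t) ^ s) / μ (ball x t) :=
  stmt9_general f r hr0 hr1 hsim K hKne hKc hKinv Δ hΔ hsep rstar hstar s μ hμp hμss
end
end

section
/- Let Δ > 0, f ∈ M_Δ, κ > 0. Then there exists ρ with 0 < ρ < r_*(f)Δ/4 such that for all g, h ∈ M_Δ with D(f,g) ≤ ρ and D(f,h) ≤ ρ, and all r ∈ [r_*(g)Δ/2, Δ/2], one has (2(r−ρ))^{s(h)} ≥ (2r)^{s(g)} − κ. -/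
open Metric Set MeasureTheory ENNReal Filter

noncomputable section

/-- A self-similar IFS of contracting similitudes on a compact set `X ⊆ ℝ^d`,
bundled with its attractor `K`. -/
structure IFS (d N : ℕ) (X : Set (Euc d)) where
  f : Fin N → Euc d → Euc d
  r : Fin N → ℝ
  r_pos : ∀ i, 0 < r i
  r_lt1 : ∀ i, r i < 1
  sim : ∀ i x y, dist (f i x) (f i y) = r i * dist x y
  maps : ∀ i, f i '' X ⊆ X
  K : Set (Euc d)
  K_sub : K ⊆ X
  K_cpt : IsCompact K
  K_ne : K.Nonempty
  K_inv : K = ⋃ i, f i '' K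

/-- `D(F,G) ≤ δ`, where `D(F,G) = max_i ‖f_i − g_i‖_∞` (supremum over `X`). -/
def Dle {d N : ℕ} {X : Set (Euc d)} (F G : IFS d N X) (δ : ℝ) : Prop :=
  ∀ i, ∀ x ∈ X, dist (F.f i x) (G.f i x) ≤ δ

/-- Membership in `M_Δ`: the attractor pieces are pairwise at distance `> Δ`. -/
def sep {d N : ℕ} {X : Set (Euc d)} (Δ : ℝ) (F : IFS d N X) : Prop :=
  ∀ i j, i ≠ j → ∀ p ∈ F.f i '' F.K, ∀ q ∈ F.f j '' F.K, Δ < dist p q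

/-- Membership in `M_SSC`: the attractor pieces are pairwise disjoint. -/
def ssc {d N : ℕ} {X : Set (Euc d)} (F : IFS d N X) : Prop :=
  ∀ i j, i ≠ j → Disjoint (F.f i '' F.K) (F.f j '' F.K)

/-- Membership in `M_OSC`: the open set condition holds with some bounded
nonempty open set. -/
def osc {d N : ℕ} {X : Set (Euc d)} (F : IFS d N X) : Prop :=
  ∃ O : Set (Euc d), IsOpen O ∧ O.Nonempty ∧ Bornology.IsBounded O ∧
    (∀ i, F.f i '' O ⊆ O) ∧ ∀ i j, i ≠ j → Disjoint (F.f i '' O) (F.f j '' O)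

/-! Moving the maps of `f` by at most `ρ` moves each contraction ratio by at most `2ρ/Δ`, because
`f` has two points of `X` at distance `> Δ`. Hence for small `ρ` the ratio vectors of `g` and `h`
lie in a fixed box `[a, b] ⊆ (0, 1)`, on which the similarity dimension is bounded by some `S`
and uniformly continuous: if `h_i ≤ (1 + η/a) g_i` for all `i`, then
`∑ h_i^(s(g)+ε) ≤ (1 + η/a)^S b^ε ∑ g_i^s(g) < 1` for small `η`, so `s(h) < s(g) + ε`.
The bound then comes from the uniform continuity of `(x, s) ↦ x^s` on a compact subset of
`(0, ∞) × [0, S]`, since `2r` and `2(r - ρ)` differ by `2ρ` and stay bounded away from `0`. -/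

open Real Topology

theorem exists_pos_forall_mem_Icc {ι : Type*} [Finite ι] {r : ι → ℝ} (h : ∀ i, r i ∈ Ioo 0 1) :
    ∃ c > 0, ∀ i, r i ∈ Icc c (1 - c) := by
  have hev : ∀ᶠ c in 𝓝 (0 : ℝ), ∀ i, c ≤ r i ∧ c ≤ 1 - r i := eventually_all.2 fun i =>
    (eventually_le_nhds (h i).1).and (eventually_le_nhds (sub_pos.2 (h i).2))
  obtain ⟨c, hc, hc0⟩ :=
    ((hev.filter_mono nhdsWithin_le_nhds).and (self_mem_nhdsWithin (s := Ioi (0 : ℝ)))).exists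
  exact ⟨c, hc0, fun i => ⟨(hc i).1, by linarith [(hc i).2]⟩⟩

theorem exists_abs_rpow_sub_rpow_lt {a A σ τ κ : ℝ} (ha : 0 < a) (hκ : 0 < κ) :
    ∃ δ > 0, ∀ x ∈ Icc a A, ∀ y ∈ Icc a A, ∀ s ∈ Icc σ τ, ∀ u ∈ Icc σ τ,
      |x - y| < δ → |s - u| < δ → |x ^ s - y ^ u| < κ := by
  have hcont : ContinuousOn (fun p : ℝ × ℝ => p.1 ^ p.2) (Icc a A ×ˢ Icc σ τ) := fun p hp =>
    (continuousAt_rpow p (Or.inl (ha.trans_le hp.1.1).ne')).continuousWithinAt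
  obtain ⟨δ, hδ, h⟩ := Metric.uniformContinuousOn_iff.1
    ((isCompact_Icc.prod isCompact_Icc).uniformContinuousOn_of_continuous hcont) κ hκ
  refine ⟨δ, hδ, fun x hx y hy s hs u hu hxy hsu => ?_⟩
  simpa [Real.dist_eq] using
    h (x, s) ⟨hx, hs⟩ (y, u) ⟨hy, hu⟩ (by rw [Prod.dist_eq]; exact max_lt hxy hsu)

theorem abs_sub_mul_dist_le_of_dist_le {α β : Type*} [PseudoMetricSpace α] [PseudoMetricSpace β]
    {f g : α → β} {a b ρ : ℝ} {x y : α} (hf : dist (f x) (f y) = a * dist x y)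
    (hg : dist (g x) (g y) = b * dist x y) (hx : dist (f x) (g x) ≤ ρ)
    (hy : dist (f y) (g y) ≤ ρ) : |b - a| * dist x y ≤ 2 * ρ := by
  calc |b - a| * dist x y = dist (dist (g x) (g y)) (dist (f x) (f y)) := by
        rw [hf, hg, Real.dist_eq, ← sub_mul, abs_mul, abs_of_nonneg dist_nonneg]
    _ ≤ dist (g x) (f x) + dist (g y) (f y) := dist_dist_dist_le _ _ _ _
    _ ≤ 2 * ρ := by rw [dist_comm (g x), dist_comm (g y)]; linarith

section SimilarityDimension

variable {ι : Type*} [Fintype ι] {r r' : ι → ℝ} {s s' : ℝ}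

theorem sum_rpow_antitone (h0 : ∀ i, 0 < r i) (h1 : ∀ i, r i ≤ 1) :
    Antitone fun s : ℝ => ∑ i, r i ^ s := fun _ _ hsu =>
  Finset.sum_le_sum fun i _ => rpow_le_rpow_of_exponent_ge (h0 i) (h1 i) hsu

theorem lt_of_sum_rpow_eq_one_of_sum_rpow_lt_one (h0 : ∀ i, 0 < r i) (h1 : ∀ i, r i ≤ 1)
    (hs : ∑ i, r i ^ s = 1) (hs' : ∑ i, r i ^ s' < 1) : s < s' := by
  by_contra! h
  have := sum_rpow_antitone h0 h1 h
  simp only [hs] at this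
  linarith

theorem pos_of_sum_rpow_eq_one (hcard : 2 ≤ Fintype.card ι) (h0 : ∀ i, 0 < r i)
    (h1 : ∀ i, r i ≤ 1) (hs : ∑ i, r i ^ s = 1) : 0 < s := by
  by_contra! hs0
  have h := sum_rpow_antitone h0 h1 hs0
  simp only [Real.rpow_zero, Finset.sum_const, Finset.card_univ, nsmul_eq_mul, mul_one, hs] at h
  have : (2 : ℝ) ≤ Fintype.card ι := by exact_mod_cast hcard
  linarith

theorem le_logb_inv_card_of_sum_rpow_eq_one {b : ℝ} (h0 : ∀ i, 0 < r i) (hb : ∀ i, r i ≤ b)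
    (hb0 : 0 < b) (hb1 : b < 1) (hs0 : 0 ≤ s) (hs : ∑ i, r i ^ s = 1) :
    s ≤ logb b (Fintype.card ι : ℝ)⁻¹ := by
  have hcard : 1 ≤ Fintype.card ι * b ^ s := calc
    1 = ∑ i, r i ^ s := hs.symm
    _ ≤ ∑ _i : ι, b ^ s := Finset.sum_le_sum fun i _ => rpow_le_rpow (h0 i).le (hb i) hs0
    _ = Fintype.card ι * b ^ s := by simp
  have hpos : (0 : ℝ) < Fintype.card ι :=
    pos_of_mul_pos_left (one_pos.trans_le hcard) (by positivity)
  rw [le_logb_iff_rpow_le_of_base_lt_one hb0 hb1 (inv_pos.2 hpos), inv_le_iff_one_le_mul₀' hpos]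
  exact hcard

theorem mem_Icc_logb_of_sum_rpow_eq_one {a b : ℝ} (hcard : 2 ≤ Fintype.card ι) (ha : 0 < a)
    (hb : b < 1) (hr : ∀ i, r i ∈ Icc a b) (hs : ∑ i, r i ^ s = 1) :
    s ∈ Icc 0 (logb b (Fintype.card ι : ℝ)⁻¹) := by
  have h0 (i : ι) : 0 < r i := ha.trans_le (hr i).1
  have hpos := pos_of_sum_rpow_eq_one hcard h0 (fun i => (hr i).2.trans hb.le) hs
  obtain ⟨i⟩ : Nonempty ι := Fintype.card_pos_iff.1 (by omega)
  exact ⟨hpos.le, le_logb_inv_card_of_sum_rpow_eq_one h0 (fun i => (hr i).2)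
    ((h0 i).trans_le (hr i).2) hb hpos.le hs⟩

theorem lt_add_of_sum_rpow_eq_one_of_le_mul {b l ε : ℝ} (h0 : ∀ i, 0 < r i) (h0' : ∀ i, 0 < r' i)
    (hb : ∀ i, r' i ≤ b) (hb1 : b < 1) (hle : ∀ i, r' i ≤ l * r i) (hs0 : 0 ≤ s)
    (hs : ∑ i, r i ^ s = 1) (hs' : ∑ i, r' i ^ s' = 1) (hε : 0 < ε) (hl : l ^ s * b ^ ε < 1) :
    s' < s + ε := by
  refine lt_of_sum_rpow_eq_one_of_sum_rpow_lt_one h0' (fun i => (hb i).trans hb1.le) hs' ?_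
  have hterm (i : ι) : r' i ^ s ≤ l ^ s * r i ^ s := by
    have hl0 : 0 ≤ l := (pos_of_mul_pos_left ((h0' i).trans_le (hle i)) (h0 i).le).le
    rw [← mul_rpow hl0 (h0 i).le]
    exact rpow_le_rpow (h0' i).le (hle i) hs0
  calc ∑ i, r' i ^ (s + ε) = ∑ i, r' i ^ s * r' i ^ ε := by simp only [rpow_add (h0' _)]
    _ ≤ ∑ i, l ^ s * r i ^ s * b ^ ε := Finset.sum_le_sum fun i _ =>
        mul_le_mul (hterm i) (rpow_le_rpow (h0' i).le (hb i) hε.le) (rpow_nonneg (h0' i).le ε)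
          ((rpow_nonneg (h0' i).le s).trans (hterm i))
    _ = l ^ s * b ^ ε := by rw [← Finset.sum_mul, ← Finset.mul_sum, hs, mul_one]
    _ < 1 := hl

theorem exists_abs_sub_lt_of_sum_rpow_eq_one {a b S ε : ℝ} (ha : 0 < a) (hb0 : 0 < b)
    (hb1 : b < 1) (hε : 0 < ε) :
    ∃ η > 0, ∀ r r' : ι → ℝ, (∀ i, r i ∈ Icc a b) → (∀ i, r' i ∈ Icc a b) →
      (∀ i, |r' i - r i| ≤ η) → ∀ s s' : ℝ, s ∈ Icc 0 S → s' ∈ Icc 0 S →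
        ∑ i, r i ^ s = 1 → ∑ i, r' i ^ s' = 1 → |s - s'| < ε := by
  have hlim : Tendsto (fun η : ℝ => (1 + η / a) ^ S * b ^ ε) (𝓝 0) (𝓝 (b ^ ε)) := by
    have : ContinuousAt (fun η : ℝ => (1 + η / a) ^ S * b ^ ε) 0 := by
      fun_prop (disch := norm_num)
    simpa using this.tendsto
  obtain ⟨η, hηlt, hη⟩ := (((hlim.eventually_lt_const (rpow_lt_one hb0.le hb1 hε)).filter_mono
    nhdsWithin_le_nhds).and (self_mem_nhdsWithin (s := Ioi (0 : ℝ)))).exists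
  have hl : 1 ≤ 1 + η / a := le_add_of_nonneg_right (by positivity)
  have hlt {r r' : ι → ℝ} (hr : ∀ i, r i ∈ Icc a b) (hr' : ∀ i, r' i ∈ Icc a b)
      (hrr' : ∀ i, |r' i - r i| ≤ η) {s s' : ℝ} (hs : s ∈ Icc 0 S) (hsum : ∑ i, r i ^ s = 1)
      (hsum' : ∑ i, r' i ^ s' = 1) : s' < s + ε := by
    refine lt_add_of_sum_rpow_eq_one_of_le_mul (l := 1 + η / a) (fun i => ha.trans_le (hr i).1)
      (fun i => ha.trans_le (hr' i).1) (fun i => (hr' i).2) hb1 (fun i => ?_) hs.1 hsum hsum' hε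
      ((mul_le_mul_of_nonneg_right (rpow_le_rpow_of_exponent_le hl hs.2) (by positivity)).trans_lt
        hηlt)
    have hηr : η ≤ r i * (η / a) := calc
      η = a * (η / a) := (mul_div_cancel₀ η ha.ne').symm
      _ ≤ r i * (η / a) := by gcongr; exact (hr i).1
    linarith [(abs_le.1 (hrr' i)).2]
  refine ⟨η, hη, fun r r' hr hr' hrr' s s' hs hs' hsum hsum' => abs_sub_lt_iff.2 ⟨?_, ?_⟩⟩
  · linarith [hlt hr' hr (fun i => abs_sub_comm (r i) (r' i) ▸ hrr' i) hs' hsum' hsum]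
  · linarith [hlt hr hr' hrr' hs hsum hsum']

end SimilarityDimension

namespace IFS

variable {d N : ℕ} {X : Set (Euc d)} {Δ ρ : ℝ} {F G : IFS d N X}

theorem exists_dist_gt_of_sep (hN : 2 ≤ N) (hF : sep Δ F) : ∃ p ∈ X, ∃ q ∈ X, Δ < dist p q := by
  obtain ⟨k, hk⟩ := F.K_ne
  have hX (i : Fin N) : F.f i k ∈ X :=
    F.K_sub (by rw [F.K_inv]; exact mem_iUnion.2 ⟨i, k, hk, rfl⟩)
  refine ⟨_, hX ⟨0, by omega⟩, _, hX ⟨1, by omega⟩, hF _ _ ?_ _ ⟨k, hk, rfl⟩ _ ⟨k, hk, rfl⟩⟩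
  simp [Fin.ext_iff]

theorem abs_r_sub_le_of_Dle (hN : 2 ≤ N) (hΔ : 0 < Δ) (hF : sep Δ F) (hG : Dle F G ρ)
    (i : Fin N) : |G.r i - F.r i| ≤ 2 * ρ / Δ := by
  obtain ⟨p, hp, q, hq, hpq⟩ := exists_dist_gt_of_sep hN hF
  rw [le_div_iff₀ hΔ]
  calc |G.r i - F.r i| * Δ ≤ |G.r i - F.r i| * dist p q := by gcongr
    _ ≤ 2 * ρ :=
      abs_sub_mul_dist_le_of_dist_le (F.sim i p q) (G.sim i p q) (hG i p hp) (hG i q hq)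

theorem abs_r_sub_r_le_of_Dle {H : IFS d N X} (hN : 2 ≤ N) (hΔ : 0 < Δ) (hF : sep Δ F)
    (hG : Dle F G ρ) (hH : Dle F H ρ) (i : Fin N) : |H.r i - G.r i| ≤ 4 * ρ / Δ := calc
  |H.r i - G.r i| ≤ |H.r i - F.r i| + |F.r i - G.r i| := abs_sub_le _ _ _
  _ ≤ 2 * ρ / Δ + 2 * ρ / Δ := by
    rw [abs_sub_comm (F.r i)]
    exact add_le_add (F.abs_r_sub_le_of_Dle hN hΔ hF hH i) (F.abs_r_sub_le_of_Dle hN hΔ hF hG i)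
  _ = 4 * ρ / Δ := by ring

end IFS

theorem stmt16_general
    {d N : ℕ} (hN : 2 ≤ N) (X : Set (Euc d))
    (Δ : ℝ) (hΔ : 0 < Δ)
    (F : IFS d N X) (hF : sep Δ F)
    (rF : ℝ) (hrF : IsLeast (Set.range F.r) rF)
    (κ : ℝ) (hκ : 0 < κ) :
    ∃ ρ : ℝ, 0 < ρ ∧ ρ < rF * Δ / 4 ∧
      ∀ G H : IFS d N X, sep Δ G → sep Δ H → Dle F G ρ → Dle F H ρ →
      ∀ sG sH : ℝ, (∑ i, G.r i ^ sG = 1) → (∑ i, H.r i ^ sH = 1) →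
      ∀ rG : ℝ, IsLeast (Set.range G.r) rG →
      ∀ t ∈ Set.Icc (rG * Δ / 2) (Δ / 2),
        (2 * t) ^ sG - κ ≤ (2 * (t - ρ)) ^ sH := by
  obtain ⟨⟨iF, rfl⟩, -⟩ := hrF
  obtain ⟨c, hc, hcF⟩ := exists_pos_forall_mem_Icc fun i => ⟨F.r_pos i, F.r_lt1 i⟩
  have hc1 : c < 1 := (hcF iF).1.trans_lt (F.r_lt1 iF)
  have hcard : 2 ≤ Fintype.card (Fin N) := by simpa using hN
  set S := logb (1 - c / 2) (Fintype.card (Fin N) : ℝ)⁻¹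
  obtain ⟨δ, hδ, hpow⟩ :=
    exists_abs_rpow_sub_rpow_lt (A := Δ) (σ := 0) (τ := S) (by positivity : 0 < c * Δ / 4) hκ
  obtain ⟨η, hη, hdim⟩ := exists_abs_sub_lt_of_sum_rpow_eq_one (ι := Fin N) (b := 1 - c / 2)
    (S := S) (half_pos hc) (by linarith) (by linarith) hδ
  obtain ⟨ρ, ⟨hρc, hρη, hρδ⟩, hρ⟩ := ((((eventually_lt_nhds (by positivity : 0 < c * Δ / 8)).and
    ((eventually_lt_nhds (by positivity : 0 < η * Δ / 4)).and
      (eventually_lt_nhds (half_pos hδ)))).filter_mono nhdsWithin_le_nhds).and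
        (self_mem_nhdsWithin (s := Ioi (0 : ℝ)))).exists
  refine ⟨ρ, hρ, by nlinarith [(hcF iF).1], ?_⟩
  rintro G H - - hG hH sG sH hsG hsH _ ⟨⟨iG, rfl⟩, -⟩ t ⟨ht₁, ht₂⟩
  have hρΔ : 2 * ρ / Δ ≤ c / 4 ∧ 4 * ρ / Δ ≤ η := by
    constructor <;> rw [div_le_iff₀ hΔ] <;> linarith
  have hbox {G' : IFS d N X} (hG' : Dle F G' ρ) (i : Fin N) :
      G'.r i ∈ Icc (c / 2) (1 - c / 2) := by
    have := abs_le.1 (F.abs_r_sub_le_of_Dle hN hΔ hF hG' i)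
    constructor <;> linarith [(hcF i).1, (hcF i).2]
  have hsG' := mem_Icc_logb_of_sum_rpow_eq_one hcard (half_pos hc) (by linarith) (hbox hG) hsG
  have hsH' := mem_Icc_logb_of_sum_rpow_eq_one hcard (half_pos hc) (by linarith) (hbox hH) hsH
  have hsGH := hdim _ _ (hbox hG) (hbox hH)
    (fun i => (F.abs_r_sub_r_le_of_Dle hN hΔ hF hG hH i).trans hρΔ.2) _ _ hsG' hsH' hsG hsH
  have ht : c * Δ / 2 ≤ 2 * t := by nlinarith [(hbox hG iG).1]
  have htρ : |2 * t - 2 * (t - ρ)| < δ := by rw [abs_of_pos] <;> linarith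
  have hpow_t := hpow (2 * t) ⟨by linarith, by linarith⟩ (2 * (t - ρ)) ⟨by linarith, by linarith⟩
    sG hsG' sH hsH' htρ hsGH
  linarith [(abs_lt.1 hpow_t).2]

/-- Lemma 3.3: for `f ∈ M_Δ` and `κ > 0` there is
`0 < ρ < r_*(f)Δ/4` such that for `g, h ∈ M_Δ` with `D(f,g) ≤ ρ`, `D(f,h) ≤ ρ`
and `r ∈ [r_*(g)Δ/2, Δ/2]`, one has `(2(r−ρ))^{s(h)} ≥ (2r)^{s(g)} − κ`. -/
theorem stmt16
    {d N : ℕ} (hN : 2 ≤ N) (X : Set (Euc d)) (hX : IsCompact X)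
    (Δ : ℝ) (hΔ : 0 < Δ)
    (F : IFS d N X) (hF : sep Δ F)
    (rF : ℝ) (hrF : IsLeast (Set.range F.r) rF)
    (κ : ℝ) (hκ : 0 < κ) :
    ∃ ρ : ℝ, 0 < ρ ∧ ρ < rF * Δ / 4 ∧
      ∀ G H : IFS d N X, sep Δ G → sep Δ H → Dle F G ρ → Dle F H ρ →
      ∀ sG sH : ℝ, (∑ i, G.r i ^ sG = 1) → (∑ i, H.r i ^ sH = 1) →
      ∀ rG : ℝ, IsLeast (Set.range G.r) rG →
      ∀ t ∈ Set.Icc (rG * Δ / 2) (Δ / 2),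
        (2 * t) ^ sG - κ ≤ (2 * (t - ρ)) ^ sH :=
  stmt16_general hN X Δ hΔ F hF rF hrF κ hκ
end
end
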